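/- arXiv:1606.07709 — 12 statements merged into one kernel-verified Lean document; each statement's English description precedes it below -/
import Mathlib

section
/- For every unique sink orientation ψ of the n-dimensional hypercube, the outmap function s_ψ : 2^[n] → 2^[n], defined by s_ψ(v) = { j ∈ [n] : the edge at v in coordinate j is outgoing from v }, is a bijection. -/
open Finset

/-- A directed step in the orientation given by outmap `s`:
from `v` along an outgoing coordinate `j`. -/
def USO.Step {n : ℕ} (s : Finset (Fin n) → Finset (Fin n))
    (v u : Finset (Fin n)) : Prop :=
  ∃ j, j ∈ s v ∧ u = symmDiff v {j}

/-- Reachability along directed paths. -/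
def USO.Reach {n : ℕ} (s : Finset (Fin n) → Finset (Fin n)) :
    Finset (Fin n) → Finset (Fin n) → Prop :=
  Relation.ReflTransGen (USO.Step s)

/-- Existence of a directed path of length exactly `k`. -/
def USO.StepN {n : ℕ} (s : Finset (Fin n) → Finset (Fin n)) :
    ℕ → Finset (Fin n) → Finset (Fin n) → Prop
  | 0, v, u => v = u
  | k + 1, v, u => ∃ w, USO.Step s v w ∧ USO.StepN s k w u

/-- `s` is (the outmap of) a unique sink orientation of the `n`-cube:
every face `F_{J,v} = {u : v ∆ u ⊆ J}` has a unique sink. -/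
def IsUSO {n : ℕ} (s : Finset (Fin n) → Finset (Fin n)) : Prop :=
  ∀ J v : Finset (Fin n), ∃! u, symmDiff v u ⊆ J ∧ s u ∩ J = ∅

/-- The reachmap of `v`: all coordinates outgoing at some vertex reachable from `v`. -/
def reachmap {n : ℕ} (s : Finset (Fin n) → Finset (Fin n))
    (v : Finset (Fin n)) : Set (Fin n) :=
  {j | ∃ u, USO.Reach s v u ∧ j ∈ s u}

/-- `s` is `i`-nice: every non-sink vertex has a directed path of length at most `i`
to a vertex of strictly smaller reachmap. -/
def IsNice {n : ℕ} (i : ℕ) (s : Finset (Fin n) → Finset (Fin n)) : Prop :=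
  ∀ v, s v ≠ ∅ → ∃ u, (∃ k ≤ i, USO.StepN s k v u) ∧ reachmap s u ⊂ reachmap s v

/-- Acyclicity of the orientation. -/
def IsAcyclic {n : ℕ} (s : Finset (Fin n) → Finset (Fin n)) : Prop :=
  ∀ v u, USO.Reach s v u → USO.Reach s u v → v = u

section AuxUSO
variable {n : ℕ}

lemma aux_notmem {J x : Finset (Fin n)} {j : Fin n} (hj : j ∉ J) :
    symmDiff x {j} ∩ J = x ∩ J := by
  ext a
  by_cases haj : a = j <;>
  simp_all [Finset.mem_symmDiff]

lemma aux_mem {J x : Finset (Fin n)} {j : Fin n} (hj : j ∈ J) :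
    symmDiff x {j} ∩ J = ∅ ↔ (x ∩ J.erase j = ∅ ∧ j ∈ x) := by
  simp only [Finset.eq_empty_iff_forall_notMem, Finset.mem_inter, Finset.mem_symmDiff,
    Finset.mem_singleton, Finset.mem_erase]
  constructor
  · intro h
    refine ⟨fun a ⟨ha, haj, haJ⟩ => (h a) ⟨Or.inl ⟨ha, haj⟩, haJ⟩, ?_⟩
    by_contra hjx
    exact (h j) ⟨Or.inr ⟨rfl, hjx⟩, hj⟩
  · rintro ⟨h1, h2⟩ a ⟨(⟨ha, haj⟩ | ⟨rfl, hjx⟩), haJ⟩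
    · exact h1 a ⟨ha, haj, haJ⟩
    · exact hjx h2

lemma aux_erase_empty {x J : Finset (Fin n)} {j : Fin n} (h : x ∩ J = ∅) :
    x ∩ J.erase j = ∅ := by
  rw [Finset.eq_empty_iff_forall_notMem]
  intro a ha
  rcases Finset.mem_inter.1 ha with ⟨h1, h2⟩
  exact Finset.eq_empty_iff_forall_notMem.1 h a
    (Finset.mem_inter.2 ⟨h1, Finset.mem_of_mem_erase h2⟩)

lemma aux_face0 {J v u : Finset (Fin n)} {j : Fin n} (h : symmDiff v u ⊆ J)
    (hju : j ∉ symmDiff v u) : symmDiff v u ⊆ J.erase j := by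
  intro a ha
  exact Finset.mem_erase.2 ⟨fun e => hju (e ▸ ha), h ha⟩

lemma aux_symm_assoc {v u : Finset (Fin n)} {j : Fin n} :
    symmDiff (symmDiff v {j}) u = symmDiff (symmDiff v u) {j} := by
  rw [symmDiff_assoc, symmDiff_comm {j} u, ← symmDiff_assoc]

lemma aux_face1 {J v u : Finset (Fin n)} {j : Fin n} (h : symmDiff v u ⊆ J)
    (hju : j ∈ symmDiff v u) : symmDiff (symmDiff v {j}) u ⊆ J.erase j := by
  rw [aux_symm_assoc]
  intro a ha
  rw [Finset.mem_symmDiff] at ha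
  rcases ha with ⟨ha, haj⟩ | ⟨ha, haj⟩
  · exact Finset.mem_erase.2 ⟨fun e => haj (by simp [e]), h ha⟩
  · simp at ha; exact absurd (ha ▸ hju) haj

lemma aux_face1' {J v u : Finset (Fin n)} {j : Fin n} (hj : j ∈ J)
    (h : symmDiff (symmDiff v {j}) u ⊆ J.erase j) :
    symmDiff v u ⊆ J ∧ j ∈ symmDiff v u := by
  rw [aux_symm_assoc] at h
  constructor
  · intro a ha
    by_cases haj : a = j
    · exact haj ▸ hj
    · have : a ∈ symmDiff (symmDiff v u) {j} := by
        rw [Finset.mem_symmDiff]; simp [haj, ha]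
      exact Finset.mem_of_mem_erase (h this)
  · by_contra hju
    have : j ∈ symmDiff (symmDiff v u) {j} := by
      rw [Finset.mem_symmDiff]; simp [hju]
    exact (Finset.mem_erase.1 (h this)).1 rfl

lemma flip_one (s : Finset (Fin n) → Finset (Fin n)) (hs : IsUSO s) (j : Fin n) :
    IsUSO (fun u => symmDiff (s u) {j}) := by
  intro J v
  by_cases hj : j ∈ J
  · -- split into two facets
    obtain ⟨w0, ⟨hw0f, hw0s⟩, uniq0⟩ := hs (J.erase j) v
    obtain ⟨w1, ⟨hw1f, hw1s⟩, uniq1⟩ := hs (J.erase j) (symmDiff v {j})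
    obtain ⟨t, ⟨htf, hts⟩, uniqt⟩ := hs J v
    have hts' : s t ∩ J.erase j = ∅ := aux_erase_empty hts
    have hjt : j ∉ s t := fun h => by
      have : j ∈ s t ∩ J := Finset.mem_inter.2 ⟨h, hj⟩
      simp [hts] at this
    have ht01 : t = w0 ∨ t = w1 := by
      by_cases hjvt : j ∈ symmDiff v t
      · exact Or.inr (uniq1 t ⟨aux_face1 htf hjvt, hts'⟩)
      · exact Or.inl (uniq0 t ⟨aux_face0 htf hjvt, hts'⟩)
    have hw0J : symmDiff v w0 ⊆ J := hw0f.trans (Finset.erase_subset _ _)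
    have hw1J : symmDiff v w1 ⊆ J := (aux_face1' hj hw1f).1
    have hne : w0 ≠ w1 := by
      intro e
      have h1 := (aux_face1' hj hw1f).2
      have h0 : j ∉ symmDiff v w0 := fun h => (Finset.mem_erase.1 (hw0f h)).1 rfl
      exact h0 (e ▸ h1)
    -- at least one of w0, w1 has j outgoing
    have hor : j ∈ s w0 ∨ j ∈ s w1 := by
      by_contra h
      push_neg at h
      have hs0 : s w0 ∩ J = ∅ := by
        rw [Finset.eq_empty_iff_forall_notMem]
        intro a ha
        rcases Finset.mem_inter.1 ha with ⟨ha1, ha2⟩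
        by_cases haj : a = j
        · exact h.1 (haj ▸ ha1)
        · exact (Finset.eq_empty_iff_forall_notMem.1 hw0s a)
            (Finset.mem_inter.2 ⟨ha1, Finset.mem_erase.2 ⟨haj, ha2⟩⟩)
      have hs1 : s w1 ∩ J = ∅ := by
        rw [Finset.eq_empty_iff_forall_notMem]
        intro a ha
        rcases Finset.mem_inter.1 ha with ⟨ha1, ha2⟩
        by_cases haj : a = j
        · exact h.2 (haj ▸ ha1)
        · exact (Finset.eq_empty_iff_forall_notMem.1 hw1s a)
            (Finset.mem_inter.2 ⟨ha1, Finset.mem_erase.2 ⟨haj, ha2⟩⟩)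
      exact hne ((uniqt w0 ⟨hw0J, hs0⟩).trans (uniqt w1 ⟨hw1J, hs1⟩).symm)
    -- not both
    have hnand : ¬(j ∈ s w0 ∧ j ∈ s w1) := by
      rintro ⟨h0, h1⟩
      rcases ht01 with rfl | rfl
      · exact hjt h0
      · exact hjt h1
    -- uniqueness helper: any sink of the flipped face is w0 or w1 with j outgoing
    have key : ∀ y, symmDiff v y ⊆ J → symmDiff (s y) {j} ∩ J = ∅ →
        (y = w0 ∨ y = w1) ∧ j ∈ s y := by
      intro y hyf hys
      rw [aux_mem hj] at hys
      refine ⟨?_, hys.2⟩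
      by_cases hjvy : j ∈ symmDiff v y
      · exact Or.inr (uniq1 y ⟨aux_face1 hyf hjvy, hys.1⟩)
      · exact Or.inl (uniq0 y ⟨aux_face0 hyf hjvy, hys.1⟩)
    rcases hor with h0 | h1
    · refine ⟨w0, ⟨hw0J, (aux_mem hj).2 ⟨hw0s, h0⟩⟩, ?_⟩
      intro y ⟨hyf, hys⟩
      rcases key y hyf hys with ⟨rfl | rfl, hjy⟩
      · rfl
      · exact absurd ⟨h0, hjy⟩ hnand
    · refine ⟨w1, ⟨hw1J, (aux_mem hj).2 ⟨hw1s, h1⟩⟩, ?_⟩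
      intro y ⟨hyf, hys⟩
      rcases key y hyf hys with ⟨rfl | rfl, hjy⟩
      · exact absurd ⟨hjy, h1⟩ hnand
      · rfl
  · obtain ⟨t, ⟨htf, hts⟩, uniq⟩ := hs J v
    refine ⟨t, ⟨htf, by rw [aux_notmem hj]; exact hts⟩, ?_⟩
    rintro y ⟨hy1, hy2⟩
    exact uniq y ⟨hy1, by rwa [aux_notmem hj] at hy2⟩

lemma flip_set (s : Finset (Fin n) → Finset (Fin n)) (hs : IsUSO s) (R : Finset (Fin n)) :
    IsUSO (fun u => symmDiff (s u) R) := by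
  induction R using Finset.induction_on with
  | empty =>
    have : (fun u => symmDiff (s u) ∅) = s := by
      funext u; rw [← Finset.bot_eq_empty, symmDiff_bot]
    rwa [this]
  | @insert a R ha ih =>
    have h1 := flip_one _ ih a
    have h2 : ∀ x : Finset (Fin n), symmDiff (symmDiff x R) {a} = symmDiff x (insert a R) := by
      intro x
      rw [symmDiff_assoc]
      congr 1
      ext b
      by_cases hba : b = a <;> simp_all [Finset.mem_symmDiff]
    simpa only [h2] using h1

private theorem outmap_bijective_aux {n : ℕ} (s : Finset (Fin n) → Finset (Fin n))
    (hs : IsUSO s) : Function.Bijective s := by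
  rw [Function.bijective_iff_existsUnique]
  intro R
  obtain ⟨u, ⟨_, hu⟩, uniq⟩ := flip_set s hs R Finset.univ ∅
  rw [Finset.inter_univ, ← Finset.bot_eq_empty, symmDiff_eq_bot] at hu
  refine ⟨u, hu, ?_⟩
  intro y hy
  exact uniq y ⟨Finset.subset_univ _, by rw [Finset.inter_univ, ← Finset.bot_eq_empty, symmDiff_eq_bot]; exact hy⟩

end AuxUSO

/-- the outmap of any USO is a bijection. -/
theorem outmap_bijective {n : ℕ} (s : Finset (Fin n) → Finset (Fin n))
    (hs : IsUSO s) : Function.Bijective s :=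
  outmap_bijective_aux s hs
end

section
/- Let ψ be a USO of the n-cube, F a face of the cube, and u the unique sink of F. Then for every vertex v ∈ F there is a directed path in ψ from v to u of length exactly the Hamming distance |v ⊕ u|, i.e. d(v,u) = |v ⊕ u|. -/
open Finset

lemma stepN_lower {n : ℕ} (s : Finset (Fin n) → Finset (Fin n)) :
    ∀ k v u, USO.StepN s k v u → (symmDiff v u).card ≤ k := by
  intro k
  induction k with
  | zero => intro v u h; simp [USO.StepN] at h; simp [h, symmDiff_self]
  | succ k ih =>
    rintro v u ⟨w, ⟨j, hj, rfl⟩, hw⟩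
    have h1 : symmDiff v u ⊆ symmDiff v (symmDiff v {j}) ∪ symmDiff (symmDiff v {j}) u :=
      symmDiff_triangle _ _ _
    have h2 : symmDiff v (symmDiff v {j}) = {j} := symmDiff_symmDiff_cancel_left v {j}
    calc (symmDiff v u).card ≤ ({j} ∪ symmDiff (symmDiff v {j}) u).card := by
          apply card_le_card; rwa [h2] at h1
      _ ≤ 1 + (symmDiff (symmDiff v {j}) u).card := by
          simpa using card_union_le {j} (symmDiff (symmDiff v {j}) u)
      _ ≤ 1 + k := Nat.add_le_add_left (ih _ _ hw) 1
      _ = k + 1 := by omega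

/-- in a USO, every vertex of a face has a directed path to the sink
of the face of length exactly the Hamming distance, and no shorter path. -/
theorem path_to_face_sink {n : ℕ} (s : Finset (Fin n) → Finset (Fin n))
    (hs : IsUSO s) (J v₀ u : Finset (Fin n))
    (hu : symmDiff v₀ u ⊆ J) (hsink : s u ∩ J = ∅)
    (v : Finset (Fin n)) (hv : symmDiff v₀ v ⊆ J) :
    USO.StepN s (symmDiff v u).card v u ∧
      ∀ k, USO.StepN s k v u → (symmDiff v u).card ≤ k := by
  refine ⟨?_, fun k h => stepN_lower s k v u h⟩
  have key : ∀ m v, symmDiff v₀ v ⊆ J → (symmDiff v u).card = m →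
      USO.StepN s m v u := by
    intro m
    induction m with
    | zero =>
      intro v hv hc
      exact symmDiff_eq_bot.mp (card_eq_zero.mp hc)
    | succ m ih =>
      intro v hv hc
      have hJsub : symmDiff v u ⊆ J := by
        calc symmDiff v u ⊆ symmDiff v v₀ ∪ symmDiff v₀ u := symmDiff_triangle _ _ _
          _ ⊆ J := by
            apply union_subset _ hu
            rwa [symmDiff_comm]
      have husink : symmDiff u u ⊆ symmDiff v u ∧ s u ∩ symmDiff v u = ∅ := by
        refine ⟨by simp [symmDiff_self], ?_⟩
        rw [← subset_empty, ← hsink]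
        exact inter_subset_inter subset_rfl hJsub
      obtain ⟨w, _, huniq⟩ := hs (symmDiff v u) u
      have hvne : v ≠ u := by
        intro h; rw [h] at hc; simp [symmDiff_self] at hc
      have hvnotsink : s v ∩ symmDiff v u ≠ ∅ := by
        intro h
        exact hvne (((huniq v ⟨by rw [symmDiff_comm], h⟩).trans
          (huniq u husink).symm))
      obtain ⟨j, hj⟩ := nonempty_iff_ne_empty.mpr hvnotsink
      rw [mem_inter] at hj
      have hj2 : j ∈ symmDiff v u := hj.2
      refine ⟨symmDiff v {j}, ⟨j, hj.1, rfl⟩, ?_⟩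
      have hsd : symmDiff (symmDiff v {j}) u = (symmDiff v u) \ {j} := by
        rw [symmDiff_right_comm]
        ext x
        by_cases hx : x = j
        · subst hx
          simp only [mem_symmDiff, mem_sdiff, mem_singleton] at hj2 ⊢
          tauto
        · simp [mem_symmDiff, mem_sdiff, hx]
      have hcard : ((symmDiff v u) \ {j}).card = m := by
        rw [card_sdiff_of_subset (by simpa using hj2)]
        simp [hc]
      have := ih (symmDiff v {j}) ?_ (by rw [hsd]; exact hcard)
      · exact this
      · calc symmDiff v₀ (symmDiff v {j}) ⊆ symmDiff v₀ v ∪ symmDiff v (symmDiff v {j}) :=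
            symmDiff_triangle _ _ _
          _ ⊆ J := by
            rw [symmDiff_symmDiff_cancel_left]
            apply union_subset hv
            simpa using hJsub hj2
  exact key _ v hv rfl
end

section
/- In any USO ψ of a face F, the unique source of F (the vertex all of whose edges in F are outgoing) has a directed path to every vertex of F; moreover for every vertex u ∈ F there is a directed path from the source w to u of length |w ⊕ u|. -/
open Finset

variable {n : ℕ}

lemma USO.symmDiff_subset_of_sdiff_eq {a b K : Finset (Fin n)}
    (h : a \ K = b \ K) : symmDiff a b ⊆ K := by
  intro j hj
  rw [Finset.mem_symmDiff] at hj
  by_contra hK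
  have h' : j ∈ a \ K ↔ j ∈ b \ K := by rw [h]
  simp only [mem_sdiff] at h'
  tauto

lemma USO.symmDiff_triangle' (a b c : Finset (Fin n)) :
    symmDiff a c ⊆ symmDiff a b ∪ symmDiff b c := by
  intro j hj
  simp only [Finset.mem_symmDiff, Finset.mem_union] at *
  tauto

/-- Counting sinks of `K`-subfaces inside the face `F_{J,v}`: there are `2^(|J|-|K|)` of them. -/
lemma USO.card_sinks {s : Finset (Fin n) → Finset (Fin n)} (hs : IsUSO s)
    {J K : Finset (Fin n)} (v : Finset (Fin n)) (hK : K ⊆ J) :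
    (univ.filter fun u => symmDiff v u ⊆ J ∧ s u ∩ K = ∅).card = 2 ^ (J.card - K.card) := by
  have key : (univ.filter fun u => symmDiff v u ⊆ J ∧ s u ∩ K = ∅).card
      = (J \ K).powerset.card := by
    apply Finset.card_bij (fun u _ => (symmDiff v u) \ K)
    · intro u hu
      simp only [mem_filter, mem_univ, true_and] at hu
      simp only [mem_powerset]
      exact sdiff_subset_sdiff hu.1 le_rfl
    · intro u₁ h₁ u₂ h₂ heq
      simp only [mem_filter, mem_univ, true_and] at h₁ h₂
      have e2 : u₁ \ K = u₂ \ K := by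
        ext j
        have m1 : j ∈ symmDiff v u₁ \ K ↔ j ∈ symmDiff v u₂ \ K := by rw [heq]
        simp only [mem_sdiff, Finset.mem_symmDiff] at m1 ⊢
        tauto
      have h12 : symmDiff u₁ u₂ ⊆ K := USO.symmDiff_subset_of_sdiff_eq e2
      obtain ⟨z, _, huniq⟩ := hs K u₁
      exact (huniq u₁ ⟨by simp, h₁.2⟩).trans (huniq u₂ ⟨h12, h₂.2⟩).symm
    · intro T hT
      simp only [mem_powerset] at hT
      obtain ⟨z, ⟨hz1, hz2⟩, _⟩ := hs K (symmDiff v T)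
      refine ⟨z, ?_, ?_⟩
      · simp only [mem_filter, mem_univ, true_and]
        refine ⟨?_, hz2⟩
        have htri := USO.symmDiff_triangle' v (symmDiff v T) z
        rw [symmDiff_symmDiff_cancel_left] at htri
        exact htri.trans (union_subset (hT.trans sdiff_subset) (hz1.trans hK))
      · ext j
        have hT' : T ⊆ J \ K := hT
        simp only [mem_sdiff]
        constructor
        · rintro ⟨hj, hjK⟩
          have hnot : j ∉ symmDiff (symmDiff v T) z := fun h => hjK (hz1 h)
          simp only [Finset.mem_symmDiff] at hj hnot
          tauto
        · intro hjT
          have hjK : j ∉ K := by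
            have := hT' hjT; simp only [mem_sdiff] at this; exact this.2
          refine ⟨?_, hjK⟩
          have hnot : j ∉ symmDiff (symmDiff v T) z := fun h => hjK (hz1 h)
          simp only [Finset.mem_symmDiff] at hnot ⊢
          tauto
  rw [key, card_powerset, card_sdiff_of_subset hK]

/-- Every face of a USO has a unique source. -/
lemma USO.unique_source {s : Finset (Fin n) → Finset (Fin n)} (hs : IsUSO s)
    (J v : Finset (Fin n)) : ∃! u, symmDiff v u ⊆ J ∧ J ⊆ s u := by
  classical
  have hcard : (univ.filter fun u => symmDiff v u ⊆ J ∧ J ⊆ s u).card = 1 := by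
    have hZ : ((univ.filter fun u => symmDiff v u ⊆ J ∧ J ⊆ s u).card : ℤ) = 1 := by
      calc ((univ.filter fun u => symmDiff v u ⊆ J ∧ J ⊆ s u).card : ℤ)
          = ∑ u ∈ univ.filter (fun u => symmDiff v u ⊆ J),
              (if J ⊆ s u then (1 : ℤ) else 0) := by
            rw [← Finset.filter_filter, Finset.card_filter]
            push_cast
            rfl
        _ = ∑ u ∈ univ.filter (fun u => symmDiff v u ⊆ J),
              ∑ K ∈ J.powerset, (if s u ∩ K = ∅ then (-1 : ℤ) ^ K.card else 0) := by
            refine Finset.sum_congr rfl (fun u _ => ?_)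
            have h1 : (J \ s u).powerset = J.powerset.filter (fun K => s u ∩ K = ∅) := by
              ext K
              simp only [mem_powerset, mem_filter]
              constructor
              · intro h
                refine ⟨h.trans sdiff_subset, ?_⟩
                rw [Finset.eq_empty_iff_forall_notMem]
                intro j hj
                rw [mem_inter] at hj
                have := h hj.2
                rw [mem_sdiff] at this
                exact this.2 hj.1
              · rintro ⟨h1, h2⟩ j hj
                rw [mem_sdiff]
                refine ⟨h1 hj, fun hjs => ?_⟩
                have : j ∈ s u ∩ K := mem_inter.mpr ⟨hjs, hj⟩
                rw [h2] at this
                exact absurd this (notMem_empty j)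
            have h2 : (if J ⊆ s u then (1 : ℤ) else 0)
                = ∑ K ∈ (J \ s u).powerset, (-1 : ℤ) ^ K.card := by
              rw [Finset.sum_powerset_neg_one_pow_card]
              by_cases h : J ⊆ s u
              · simp [h, Finset.sdiff_eq_empty_iff_subset.mpr h]
              · simp [h, fun hc => h (Finset.sdiff_eq_empty_iff_subset.mp hc)]
            rw [h2, h1, Finset.sum_filter]
        _ = ∑ K ∈ J.powerset, ∑ u ∈ univ.filter (fun u => symmDiff v u ⊆ J),
              (if s u ∩ K = ∅ then (-1 : ℤ) ^ K.card else 0) := Finset.sum_comm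
        _ = ∑ K ∈ J.powerset, (-1 : ℤ) ^ K.card * 2 ^ (J.card - K.card) := by
            refine Finset.sum_congr rfl (fun K hK => ?_)
            rw [mem_powerset] at hK
            rw [← Finset.sum_filter, Finset.filter_filter, Finset.sum_const,
              USO.card_sinks hs v hK]
            ring
        _ = 1 := by
            have hp := Finset.prod_add (fun _ : Fin n => (-1 : ℤ)) (fun _ => 2) J
            simp only [Finset.prod_const] at hp
            norm_num at hp
            conv_rhs => rw [hp]
            refine Finset.sum_congr rfl (fun K hK => ?_)
            rw [mem_powerset] at hK
            rw [card_sdiff_of_subset hK]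
    exact_mod_cast hZ
  obtain ⟨a, ha⟩ := Finset.card_eq_one.mp hcard
  have haMem : a ∈ univ.filter fun u => symmDiff v u ⊆ J ∧ J ⊆ s u := by
    rw [ha]; exact mem_singleton_self a
  simp only [mem_filter, mem_univ, true_and] at haMem
  refine ⟨a, haMem, fun u hu => ?_⟩
  have hu' : u ∈ univ.filter fun u => symmDiff v u ⊆ J ∧ J ⊆ s u := by
    simp only [mem_filter, mem_univ, true_and]; exact hu
  rw [ha, mem_singleton] at hu'
  exact hu'

/-- Each edge is consistently oriented: if `j` is not outgoing at `u`,
it is outgoing at the other endpoint. -/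
lemma USO.edge_out {s : Finset (Fin n) → Finset (Fin n)} (hs : IsUSO s)
    {u : Finset (Fin n)} {j : Fin n} (h : j ∉ s u) : j ∈ s (symmDiff u {j}) := by
  by_contra h'
  obtain ⟨z, _, huniq⟩ := hs {j} u
  have h1 : u = z := huniq u ⟨by simp, by
    rw [Finset.eq_empty_iff_forall_notMem]
    intro x hx
    rw [mem_inter, mem_singleton] at hx
    exact h (hx.2 ▸ hx.1)⟩
  have h2 : symmDiff u {j} = z := huniq (symmDiff u {j}) ⟨by
      rw [symmDiff_symmDiff_cancel_left], by
    rw [Finset.eq_empty_iff_forall_notMem]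
    intro x hx
    rw [mem_inter, mem_singleton] at hx
    exact h' (hx.2 ▸ hx.1)⟩
  have h3 : symmDiff u {j} = u := h2.trans h1.symm
  have h4 : ({j} : Finset (Fin n)) = ∅ := by
    have h5 := congrArg (fun t => symmDiff u t) h3
    simp only [symmDiff_symmDiff_cancel_left, symmDiff_self, Finset.bot_eq_empty] at h5
    exact h5
  exact Finset.singleton_ne_empty j h4

lemma USO.stepN_snoc {s : Finset (Fin n) → Finset (Fin n)} :
    ∀ {k v w u}, USO.StepN s k v w → USO.Step s w u → USO.StepN s (k + 1) v u := by
  intro k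
  induction k with
  | zero => intro v w u h hst; exact ⟨u, h ▸ hst, rfl⟩
  | succ k ih =>
    rintro v w u ⟨x, hx, hrest⟩ hst
    exact ⟨x, hx, ih hrest hst⟩

lemma USO.reach_of_stepN {s : Finset (Fin n) → Finset (Fin n)} :
    ∀ {k v u}, USO.StepN s k v u → USO.Reach s v u := by
  intro k
  induction k with
  | zero => intro v u h; exact h ▸ Relation.ReflTransGen.refl
  | succ k ih =>
    rintro v u ⟨x, hx, hrest⟩
    exact Relation.ReflTransGen.head hx (ih hrest)


/-- in a USO, the source of a face has a directed path to every vertex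
of the face, of length equal to the Hamming distance. -/
theorem path_from_face_source {n : ℕ} (s : Finset (Fin n) → Finset (Fin n))
    (hs : IsUSO s) (J v₀ w : Finset (Fin n))
    (hw : symmDiff v₀ w ⊆ J) (hsource : J ⊆ s w) :
    ∀ u, symmDiff v₀ u ⊆ J →
      USO.Reach s w u ∧ USO.StepN s (symmDiff w u).card w u := by
  have aux : ∀ d : ℕ, ∀ u, symmDiff w u ⊆ J → (symmDiff w u).card = d →
      USO.Reach s w u ∧ USO.StepN s d w u := by
    intro d
    induction d using Nat.strong_induction_on with
    | _ d ih =>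
      intro u hDJ hcard
      by_cases hwu : w = u
      · subst hwu
        rw [symmDiff_self] at hcard
        simp only [Finset.bot_eq_empty, card_empty] at hcard
        subst hcard
        exact ⟨Relation.ReflTransGen.refl, rfl⟩
      · obtain ⟨a, _, huniq⟩ := USO.unique_source hs (symmDiff w u) w
        have hwa : w = a := huniq w ⟨by simp, hDJ.trans hsource⟩
        have hune : ¬ symmDiff w u ⊆ s u := fun hcon =>
          hwu (hwa.trans (huniq u ⟨Finset.Subset.refl _, hcon⟩).symm)
        obtain ⟨j, hjD, hjs⟩ := Finset.not_subset.mp hune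
        have hjout : j ∈ s (symmDiff u {j}) := USO.edge_out hs hjs
        set u' := symmDiff u {j} with hu'
        have hwu' : symmDiff w u' = (symmDiff w u).erase j := by
          have hjD' := hjD
          rw [Finset.mem_symmDiff] at hjD'
          ext x
          simp only [hu', Finset.mem_symmDiff, mem_erase, mem_singleton]
          by_cases hx : x = j
          · subst hx; tauto
          · tauto
        have hd1 : (symmDiff w u').card = d - 1 := by
          rw [hwu', card_erase_of_mem hjD, hcard]
        have hdpos : 1 ≤ d := by
          rw [← hcard]
          exact card_pos.mpr ⟨j, hjD⟩
        obtain ⟨hr, hsN⟩ := ih (d - 1) (by omega) u'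
          (by rw [hwu']; exact (erase_subset _ _).trans hDJ) hd1
        have hstep : USO.Step s u' u := ⟨j, hjout, by
          rw [hu', symmDiff_symmDiff_cancel_right]⟩
        have hd : d = (d - 1) + 1 := by omega
        exact ⟨hr.tail hstep, hd ▸ USO.stepN_snoc hsN hstep⟩
  intro u hu
  have hD : symmDiff w u ⊆ J := by
    refine (USO.symmDiff_triangle' w v₀ u).trans (union_subset ?_ hu)
    rw [symmDiff_comm]; exact hw
  exact aux _ u hD rfl
end

section
/- Started at any vertex of an i-nice n-dimensional USO, the Random Edge random walk (at each step choose an outgoing edge uniformly at random) reaches the global sink after an expected number of at most O(n^{i+1}) steps; more precisely at most n · Σ_{k=1}^{i} n^k steps in expectation. -/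
open Finset

/-!
Let `ρ(v)` be the size of the reachmap of `v`, `H = n + n² + ⋯ + nⁱ`, and `e(v) ∈ [1, i]` the
length of a shortest path from a non-sink `v` to a vertex of smaller reachmap. The function
`F(v) = ρ(v)·H − (n + ⋯ + n^(i − e(v)))`, with `F = 0` at sinks, satisfies
`F(v) ≥ 1 + (average of F over the out-neighbours of v)`: every out-neighbour `w` has
`F(w) ≤ ρ(w)·H ≤ ρ(v)·H`, while the first edge of a shortest escape path lowers `ρ` or `e`, so at
its end `F ≤ ρ(v)·H − n·(1 + n + ⋯ + n^(i − e(v)))`; it is chosen with probability at least `1/n`.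
A sink is reachable from every vertex, so the maximum principle applied to `E − F` gives
`E ≤ F ≤ n·H`.
-/

namespace USO

variable {n : ℕ} {s : Finset (Fin n) → Finset (Fin n)}

theorem step_flip {v : Finset (Fin n)} {j : Fin n} (hj : j ∈ s v) :
    Step s v (symmDiff v {j}) :=
  ⟨j, hj, rfl⟩

theorem reach_of_stepN_s4 : ∀ {k : ℕ} {v u : Finset (Fin n)}, StepN s k v u → Reach s v u
  | 0, _, _, h => h ▸ Relation.ReflTransGen.refl
  | _ + 1, _, _, ⟨_, hvw, hwu⟩ => Relation.ReflTransGen.head hvw (reach_of_stepN_s4 hwu)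

end USO

open USO

section Reachmap

variable {n : ℕ} {s : Finset (Fin n) → Finset (Fin n)} {v w : Finset (Fin n)}

theorem coe_subset_reachmap : (s v : Set (Fin n)) ⊆ reachmap s v :=
  fun _ hj => ⟨v, Relation.ReflTransGen.refl, hj⟩

theorem reachmap_anti (h : Reach s v w) : reachmap s w ⊆ reachmap s v :=
  fun _ ⟨u, hwu, hj⟩ => ⟨u, h.trans hwu, hj⟩

theorem reachmap_eq_empty_iff : reachmap s v = ∅ ↔ s v = ∅ := by
  refine ⟨fun h => ?_, fun h => Set.eq_empty_of_forall_notMem fun j ⟨u, hvu, hj⟩ => ?_⟩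
  · simpa [h] using coe_subset_reachmap (s := s) (v := v)
  · rcases hvu.cases_head with rfl | ⟨_, ⟨k, hk, _⟩, _⟩
    · simp [h] at hj
    · simp [h] at hk

theorem ncard_reachmap_le : (reachmap s v).ncard ≤ n := by
  simpa using Set.ncard_le_ncard (Set.subset_univ (reachmap s v))

end Reachmap

theorem IsNice.exists_reach_sink {n i : ℕ} {s : Finset (Fin n) → Finset (Fin n)}
    (hnice : IsNice i s) (v : Finset (Fin n)) : ∃ u, Reach s v u ∧ s u = ∅ := by
  induction h : (reachmap s v).ncard using Nat.strong_induction_on generalizing v with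
  | _ m ih =>
    by_cases hv : s v = ∅
    · exact ⟨v, Relation.ReflTransGen.refl, hv⟩
    obtain ⟨w, ⟨k, -, hvw⟩, hlt⟩ := hnice v hv
    obtain ⟨u, hwu, hu⟩ := ih _ (h ▸ Set.ncard_lt_ncard hlt) w rfl
    exact ⟨u, (reach_of_stepN_s4 hvw).trans hwu, hu⟩

theorem Finset.forall_eq_of_le_average {ι : Type*} {S : Finset ι} {f : ι → ℝ} {M : ℝ}
    (hf : ∀ j ∈ S, f j ≤ M) (hM : M ≤ (1 / (#S : ℝ)) * ∑ j ∈ S, f j) : ∀ j ∈ S, f j = M := by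
  rcases S.eq_empty_or_nonempty with rfl | hS
  · simp
  have hsum : ∑ j ∈ S, f j = ∑ _j ∈ S, M := by
    refine le_antisymm (sum_le_sum hf) ?_
    rw [sum_const, nsmul_eq_mul]
    rwa [one_div_mul_eq_div, le_div_iff₀' (by exact_mod_cast hS.card_pos)] at hM
  exact (sum_eq_sum_iff_of_le hf).1 hsum

section MaximumPrinciple

variable {n : ℕ} {s : Finset (Fin n) → Finset (Fin n)}

def IsSubharmonic (s : Finset (Fin n) → Finset (Fin n)) (D : Finset (Fin n) → ℝ) : Prop :=
  ∀ v, s v ≠ ∅ → D v ≤ (1 / ((s v).card : ℝ)) * ∑ j ∈ s v, D (symmDiff v {j})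

theorem IsSubharmonic.eq_of_reach {D : Finset (Fin n) → ℝ} (hD : IsSubharmonic s D)
    {v u : Finset (Fin n)} (hmax : ∀ w, D w ≤ D v) (hvu : Reach s v u) : D u = D v := by
  induction hvu with
  | refl => rfl
  | @tail w _ _ hwu ih =>
    obtain ⟨j, hj, rfl⟩ := hwu
    have hw : s w ≠ ∅ := ne_empty_of_mem hj
    rw [← ih]
    rw [← ih] at hmax
    exact Finset.forall_eq_of_le_average (fun k _ => hmax _) (hD w hw) j hj

theorem IsSubharmonic.nonpos {D : Finset (Fin n) → ℝ} (hD : IsSubharmonic s D)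
    (hsink : ∀ v, ∃ u, Reach s v u ∧ s u = ∅) (h0 : ∀ v, s v = ∅ → D v ≤ 0)
    (v : Finset (Fin n)) : D v ≤ 0 := by
  obtain ⟨v₀, -, hmax⟩ := exists_max_image univ D univ_nonempty
  obtain ⟨u, hv₀u, hu⟩ := hsink v₀
  calc D v ≤ D v₀ := hmax v (mem_univ v)
    _ = D u := (hD.eq_of_reach (fun w => hmax w (mem_univ w)) hv₀u).symm
    _ ≤ 0 := h0 u hu

end MaximumPrinciple

section PowSum

noncomputable def powSum (x : ℝ) (t : ℕ) : ℝ := ∑ k ∈ Icc 1 t, x ^ k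

theorem powSum_eq_sum_range (x : ℝ) (t : ℕ) : powSum x t = ∑ k ∈ range t, x ^ (k + 1) := by
  rw [powSum, ← Finset.Ico_add_one_right_eq_Icc, sum_Ico_eq_sum_range]
  simp only [Nat.add_sub_cancel, add_comm 1]

theorem powSum_succ (x : ℝ) (t : ℕ) : powSum x (t + 1) = x * (1 + powSum x t) := by
  simp only [powSum_eq_sum_range, sum_range_succ', mul_add, mul_sum, pow_succ']
  ring

theorem powSum_nonneg {x : ℝ} (hx : 0 ≤ x) (t : ℕ) : 0 ≤ powSum x t :=
  sum_nonneg fun _ _ => pow_nonneg hx _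

theorem powSum_mono {x : ℝ} (hx : 0 ≤ x) : Monotone (powSum x) := fun _ _ h =>
  sum_le_sum_of_subset_of_nonneg (Icc_subset_Icc_right h) fun _ _ _ => pow_nonneg hx _

end PowSum

section HittingBound

variable {n i : ℕ} {s : Finset (Fin n) → Finset (Fin n)} {v w : Finset (Fin n)}

noncomputable def escapeDist (s : Finset (Fin n) → Finset (Fin n)) (v : Finset (Fin n)) : ℕ :=
  sInf {k | ∃ u, StepN s k v u ∧ reachmap s u ⊂ reachmap s v}

theorem escapeDist_le_of_stepN {k : ℕ} {u : Finset (Fin n)} (hvu : StepN s k v u)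
    (hu : reachmap s u ⊂ reachmap s v) : escapeDist s v ≤ k :=
  Nat.sInf_le ⟨u, hvu, hu⟩

theorem IsNice.escapeDist_le (hnice : IsNice i s) (hv : s v ≠ ∅) : escapeDist s v ≤ i := by
  obtain ⟨u, ⟨k, hk, hvu⟩, hu⟩ := hnice v hv
  exact (escapeDist_le_of_stepN hvu hu).trans hk

theorem IsNice.exists_step_escapeDist (hnice : IsNice i s) (hv : s v ≠ ∅) :
    ∃ d w u, escapeDist s v = d + 1 ∧ Step s v w ∧ StepN s d w u ∧
      reachmap s u ⊂ reachmap s v := by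
  obtain ⟨u, ⟨k, -, hvu⟩, hu⟩ := hnice v hv
  obtain ⟨u, hvu, hu⟩ : ∃ u, StepN s (escapeDist s v) v u ∧ reachmap s u ⊂ reachmap s v :=
    Nat.sInf_mem (s := {k | ∃ u, StepN s k v u ∧ reachmap s u ⊂ reachmap s v}) ⟨k, u, hvu, hu⟩
  cases h : escapeDist s v with
  | zero =>
    rw [h] at hvu
    exact absurd (hvu ▸ hu) (lt_irrefl _)
  | succ d =>
    rw [h] at hvu
    obtain ⟨w, hvw, hwu⟩ := hvu
    exact ⟨d, w, u, rfl, hvw, hwu, hu⟩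

noncomputable def hittingBound (i : ℕ) (s : Finset (Fin n) → Finset (Fin n))
    (v : Finset (Fin n)) : ℝ :=
  if s v = ∅ then 0 else (reachmap s v).ncard * powSum n i - powSum n (i - escapeDist s v)

theorem hittingBound_le_ncard_mul (v : Finset (Fin n)) :
    hittingBound i s v ≤ (reachmap s v).ncard * powSum n i := by
  have hH := powSum_nonneg (Nat.cast_nonneg n) i
  unfold hittingBound
  split_ifs
  · exact mul_nonneg (Nat.cast_nonneg _) hH
  · linarith [powSum_nonneg (Nat.cast_nonneg n) (i - escapeDist s v)]

theorem hittingBound_le_of_step (hvw : Step s v w) :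
    hittingBound i s w ≤ (reachmap s v).ncard * powSum n i := by
  refine (hittingBound_le_ncard_mul w).trans <| mul_le_mul_of_nonneg_right ?_ <|
    powSum_nonneg (Nat.cast_nonneg n) i
  exact_mod_cast Set.ncard_le_ncard (reachmap_anti (.single hvw))

theorem hittingBound_le_of_step_of_stepN (hv : s v ≠ ∅) {d : ℕ} {u : Finset (Fin n)}
    (hvw : Step s v w) (hwu : StepN s d w u) (hu : reachmap s u ⊂ reachmap s v) :
    hittingBound i s w ≤ (reachmap s v).ncard * powSum n i - powSum n (i - d) := by
  have hsub : reachmap s w ⊆ reachmap s v := reachmap_anti (.single hvw)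
  rcases (Set.ncard_le_ncard hsub).lt_or_eq with hlt | heq
  · have hH : powSum n (i - d) ≤ powSum n i := powSum_mono (Nat.cast_nonneg n) (Nat.sub_le i d)
    have hρ : ((reachmap s w).ncard : ℝ) + 1 ≤ (reachmap s v).ncard := by exact_mod_cast hlt
    nlinarith [hittingBound_le_ncard_mul (i := i) (s := s) w, powSum_nonneg (Nat.cast_nonneg n) i]
  · have hrw : reachmap s w = reachmap s v := Set.eq_of_subset_of_ncard_le hsub heq.ge
    have hw : s w ≠ ∅ := fun h => hv <| by
      rw [← reachmap_eq_empty_iff, ← hrw, reachmap_eq_empty_iff.2 h]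
    have hesc : escapeDist s w ≤ d := escapeDist_le_of_stepN hwu (hrw ▸ hu)
    rw [hittingBound, if_neg hw, hrw]
    exact sub_le_sub_left (powSum_mono (Nat.cast_nonneg n) (by omega)) _

theorem IsNice.one_add_average_hittingBound_le (hnice : IsNice i s) (hv : s v ≠ ∅) :
    1 + (1 / ((s v).card : ℝ)) * ∑ j ∈ s v, hittingBound i s (symmDiff v {j}) ≤
      hittingBound i s v := by
  obtain ⟨d, _, u, hd, ⟨j₀, hj₀, rfl⟩, hwu, hu⟩ := hnice.exists_step_escapeDist hv
  obtain ⟨t, ht⟩ : ∃ t, i - d = t + 1 := ⟨i - (d + 1), by have := hnice.escapeDist_le hv; omega⟩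
  set ρH : ℝ := (reachmap s v).ncard * powSum n i
  have hc : (0 : ℝ) < (s v).card := by exact_mod_cast card_pos.2 (nonempty_iff_ne_empty.2 hv)
  have hcn : ((s v).card : ℝ) ≤ n := by exact_mod_cast (card_le_univ (s v)).trans_eq (by simp)
  have hsum : ∑ j ∈ s v, hittingBound i s (symmDiff v {j}) ≤
      (s v).card * ρH - n * (1 + powSum n t) := by
    rw [← add_sum_erase _ _ hj₀]
    have hrest : ∑ j ∈ (s v).erase j₀, hittingBound i s (symmDiff v {j}) ≤
        ((s v).card - 1) * ρH := by
      refine (sum_le_sum fun j hj => hittingBound_le_of_step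
        (step_flip (mem_of_mem_erase hj))).trans_eq ?_
      rw [sum_const, card_erase_of_mem hj₀, nsmul_eq_mul,
        Nat.cast_sub (card_pos.2 ⟨j₀, hj₀⟩), Nat.cast_one]
    have hfirst := hittingBound_le_of_step_of_stepN (i := i) hv (step_flip hj₀) hwu hu
    rw [ht, powSum_succ] at hfirst
    linarith
  rw [hittingBound, if_neg hv, hd, show i - (d + 1) = t by omega, one_div_mul_eq_div,
    ← le_sub_iff_add_le', div_le_iff₀ hc]
  nlinarith [powSum_nonneg (Nat.cast_nonneg n) t]

theorem IsNice.le_hittingBound (hnice : IsNice i s) {E : Finset (Fin n) → ℝ}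
    (hE0 : ∀ v, s v = ∅ → E v = 0)
    (hErec : ∀ v, s v ≠ ∅ →
      E v = 1 + (1 / ((s v).card : ℝ)) * ∑ j ∈ s v, E (symmDiff v {j}))
    (v : Finset (Fin n)) : E v ≤ hittingBound i s v := by
  have hsub : IsSubharmonic s (fun w => E w - hittingBound i s w) := by
    intro w hw
    dsimp only
    rw [sum_sub_distrib, mul_sub, hErec w hw]
    linarith [hnice.one_add_average_hittingBound_le hw]
  have h0 : ∀ w, s w = ∅ → E w - hittingBound i s w ≤ 0 := fun w hw => by
    simp [hE0 w hw, hittingBound, hw]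
  linarith [hsub.nonpos hnice.exists_reach_sink h0 v]

end HittingBound

theorem random_edge_on_nice_general {n i : ℕ} (s : Finset (Fin n) → Finset (Fin n))
    (hnice : IsNice i s)
    (E : Finset (Fin n) → ℝ)
    (hE0 : ∀ v, s v = ∅ → E v = 0)
    (hErec : ∀ v, s v ≠ ∅ →
      E v = 1 + (1 / ((s v).card : ℝ)) * ∑ j ∈ s v, E (symmDiff v {j})) :
    ∀ v, E v ≤ (n : ℝ) * ∑ k ∈ Finset.Icc 1 i, (n : ℝ) ^ k := by
  intro v
  calc E v ≤ hittingBound i s v := hnice.le_hittingBound hE0 hErec v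
    _ ≤ (reachmap s v).ncard * powSum n i := hittingBound_le_ncard_mul v
    _ ≤ n * powSum n i := by
      gcongr
      · exact powSum_nonneg (Nat.cast_nonneg n) i
      · exact ncard_reachmap_le

/-- on an i-nice n-dimensional USO, the expected number of steps
of Random Edge (given by the hitting-time equations) from any vertex is at most
n · ∑_{k=1}^{i} n^k. -/
theorem random_edge_on_nice {n i : ℕ} (s : Finset (Fin n) → Finset (Fin n))
    (hs : IsUSO s) (hnice : IsNice i s)
    (E : Finset (Fin n) → ℝ)
    (hE0 : ∀ v, s v = ∅ → E v = 0)
    (hErec : ∀ v, s v ≠ ∅ →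
      E v = 1 + (1 / ((s v).card : ℝ)) * ∑ j ∈ s v, E (symmDiff v {j})) :
    ∀ v, E v ≤ (n : ℝ) * ∑ k ∈ Finset.Icc 1 i, (n : ℝ) ^ k :=
  random_edge_on_nice_general s hnice E hE0 hErec
end

section
/- For every USO ψ of the n-cube with global sink t and every vertex v, the reachmap r_ψ(v) contains v ⊕ t; in particular every USO of dimension n is n-nice (every non-sink vertex is n-covered by the sink t). -/
open Finset

lemma reachmap_key {n : ℕ} (s : Finset (Fin n) → Finset (Fin n))
    (hs : IsUSO s) (t : Finset (Fin n)) (ht : s t = ∅) :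
    ∀ v, (↑(symmDiff v t) ⊆ reachmap s v) ∧
      USO.StepN s (symmDiff v t).card v t := by
  intro v
  generalize hJ : symmDiff v t = J
  induction J using Finset.strongInduction generalizing v with
  | _ J ih =>
    rcases eq_or_ne J ∅ with rfl | hne
    · have hv : v = t := by
        have := hJ
        rwa [← Finset.bot_eq_empty, symmDiff_eq_bot] at this
      constructor
      · simp
      · simpa [Finset.card_empty, USO.StepN] using hv
    · -- v ≠ t; get outgoing edge in J
      have hvJ : s v ∩ J ≠ ∅ := by
        intro h0
        obtain ⟨u, hu, huniq⟩ := hs J v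
        have h1 : v = u := huniq v ⟨by simp, h0⟩
        have h2 : t = u := huniq t ⟨by rw [hJ], by simp [ht]⟩
        have : v = t := h1.trans h2.symm
        rw [this, symmDiff_self] at hJ
        exact hne hJ.symm
      obtain ⟨j, hj⟩ := Finset.nonempty_iff_ne_empty.2 hvJ
      simp only [Finset.mem_inter] at hj
      set w := symmDiff v ({j} : Finset (Fin n)) with hw
      have hstep : USO.Step s v w := ⟨j, hj.1, rfl⟩
      have hwt : symmDiff w t = J.erase j := by
        rw [hw, symmDiff_comm v, symmDiff_assoc, hJ]
        ext i
        simp only [Finset.mem_symmDiff, Finset.mem_singleton, Finset.mem_erase]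
        constructor
        · rintro (⟨rfl, h⟩ | ⟨h1, h2⟩)
          · exact absurd hj.2 h
          · exact ⟨fun h => h2 h, h1⟩
        · rintro ⟨h1, h2⟩
          exact Or.inr ⟨h2, h1⟩
      have hss : J.erase j ⊂ J := Finset.erase_ssubset hj.2
      obtain ⟨ihsub, ihstep⟩ := ih _ hss w hwt
      have hmono : reachmap s w ⊆ reachmap s v := by
        rintro i ⟨u, hu, hiu⟩
        exact ⟨u, Relation.ReflTransGen.head hstep hu, hiu⟩
      constructor
      · intro i hi
        simp only [Finset.coe_mem, Finset.mem_coe] at hi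
        rcases eq_or_ne i j with rfl | hij
        · exact ⟨v, Relation.ReflTransGen.refl, hj.1⟩
        · exact hmono (ihsub (by simp [Finset.mem_erase, hij, hi]))
      · have hcard : J.card = (J.erase j).card + 1 :=
          (Finset.card_erase_add_one hj.2).symm
        rw [hcard]
        exact ⟨w, hstep, ihstep⟩

lemma reachmap_sink_empty {n : ℕ} (s : Finset (Fin n) → Finset (Fin n))
    (t : Finset (Fin n)) (ht : s t = ∅) : reachmap s t = ∅ := by
  ext j
  simp only [reachmap, Set.mem_setOf_eq, Set.mem_empty_iff_false, iff_false]
  rintro ⟨u, hu, hju⟩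
  have : u = t := by
    rcases Relation.ReflTransGen.cases_head hu with rfl | ⟨c, ⟨i, hi, _⟩, _⟩
    · rfl
    · rw [ht] at hi; exact absurd hi (Finset.notMem_empty i)
  rw [this, ht] at hju; exact absurd hju (Finset.notMem_empty j)

/-- for every USO with global sink t, the reachmap of every vertex v
contains v ⊕ t; in particular every n-dimensional USO is n-nice. -/
theorem reachmap_contains_sink_diff {n : ℕ} (s : Finset (Fin n) → Finset (Fin n))
    (hs : IsUSO s) (t : Finset (Fin n)) (ht : s t = ∅) :
    (∀ v, ↑(symmDiff v t) ⊆ reachmap s v) ∧ IsNice n s := by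
  have key := reachmap_key s hs t ht
  refine ⟨fun v => (key v).1, fun v hv => ?_⟩
  refine ⟨t, ⟨(symmDiff v t).card, ?_, (key v).2⟩, ?_⟩
  · simpa using Finset.card_le_card (Finset.subset_univ (symmDiff v t))
  · rw [reachmap_sink_empty s t ht, Set.empty_ssubset]
    obtain ⟨j, hj⟩ := Finset.nonempty_iff_ne_empty.2 hv
    exact ⟨j, v, Relation.ReflTransGen.refl, hj⟩
end

section
/- Product lemma for USO: Let B ⊆ A be coordinate sets, B̄ = A ∖ B. Let s̃ be a USO on the cube over B and for each u ⊆ B let s_u be a USO on the cube over B̄. Then the orientation on the cube over A given by the outmap s(v) = s̃(v ∩ B) ∪ s_{v∩B}(v ∩ B̄) is a USO. -/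
open Finset

/-- `s` is a USO on the subcube `2^C`: outmaps of vertices of the subcube lie in `C`,
and every nonempty face of the subcube has a unique sink. -/
def IsUSOOn {n : ℕ} (C : Finset (Fin n)) (s : Finset (Fin n) → Finset (Fin n)) : Prop :=
  (∀ v, v ⊆ C → s v ⊆ C) ∧
  ∀ J v : Finset (Fin n), J ⊆ C → v ⊆ C →
    ∃! u, u ⊆ C ∧ symmDiff v u ⊆ J ∧ s u ∩ J = ∅

lemma symmDiff_inter_distrib {n : ℕ} (v u C : Finset (Fin n)) :
    symmDiff v u ∩ C = symmDiff (v ∩ C) (u ∩ C) := by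
  ext x; simp [Finset.mem_symmDiff]; tauto

lemma inter_eq_inter_inter {n : ℕ} {X C : Finset (Fin n)} (J : Finset (Fin n))
    (h : X ⊆ C) : X ∩ J = X ∩ (J ∩ C) := by
  ext x
  simp only [Finset.mem_inter]
  constructor
  · rintro ⟨h1, h2⟩; exact ⟨h1, h2, h h1⟩
  · rintro ⟨h1, h2, _⟩; exact ⟨h1, h2⟩

/-- product lemma. -/
theorem product_lemma {n : ℕ} (A B : Finset (Fin n)) (hBA : B ⊆ A)
    (st : Finset (Fin n) → Finset (Fin n)) (hst : IsUSOOn B st)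
    (su : Finset (Fin n) → Finset (Fin n) → Finset (Fin n))
    (hsu : ∀ u, u ⊆ B → IsUSOOn (A \ B) (su u)) :
    IsUSOOn A (fun v => st (v ∩ B) ∪ su (v ∩ B) (v ∩ (A \ B))) := by
  obtain ⟨hst1, hst2⟩ := hst
  set D := A \ B with hD
  have hDA : D ⊆ A := sdiff_subset
  have hBD : Disjoint B D := disjoint_sdiff
  have hBDA : B ∪ D = A := union_sdiff_of_subset hBA
  have split : ∀ u : Finset (Fin n), u ⊆ A → u = (u ∩ B) ∪ (u ∩ D) := by
    intro u hu
    rw [← inter_union_distrib_left, hBDA, inter_eq_left.2 hu]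
  constructor
  · intro v hv
    exact union_subset ((hst1 _ inter_subset_right).trans hBA)
      (((hsu _ inter_subset_right).1 _ inter_subset_right).trans hDA)
  · intro J v hJ hv
    obtain ⟨b, ⟨hbB, hb1, hb2⟩, hbu⟩ :=
      hst2 (J ∩ B) (v ∩ B) inter_subset_right inter_subset_right
    obtain ⟨hsu1, hsu2⟩ := hsu b hbB
    obtain ⟨d, ⟨hdD, hd1, hd2⟩, hdu⟩ :=
      hsu2 (J ∩ D) (v ∩ D) inter_subset_right inter_subset_right
    have hdB : d ∩ B = ∅ := by
      rw [← disjoint_iff_inter_eq_empty]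
      exact (hBD.symm.mono_left hdD)
    have hbD : b ∩ D = ∅ := by
      rw [← disjoint_iff_inter_eq_empty]
      exact (hBD.mono_left hbB)
    have huB : (b ∪ d) ∩ B = b := by
      rw [union_inter_distrib_right, inter_eq_left.2 hbB, hdB, union_empty]
    have huD : (b ∪ d) ∩ D = d := by
      rw [union_inter_distrib_right, inter_eq_left.2 hdD, hbD, empty_union]
    have huA : b ∪ d ⊆ A := union_subset (hbB.trans hBA) (hdD.trans hDA)
    refine ⟨b ∪ d, ⟨huA, ?_, ?_⟩, ?_⟩
    · intro x hx
      have hxA : x ∈ A := by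
        rw [mem_symmDiff] at hx
        rcases hx with ⟨h, _⟩ | ⟨h, _⟩
        · exact hv h
        · exact huA h
      rw [← hBDA, mem_union] at hxA
      rcases hxA with hxB | hxD
      · have hm : x ∈ symmDiff v (b ∪ d) ∩ B := mem_inter.2 ⟨hx, hxB⟩
        rw [symmDiff_inter_distrib, huB] at hm
        exact inter_subset_left (hb1 hm)
      · have hm : x ∈ symmDiff v (b ∪ d) ∩ D := mem_inter.2 ⟨hx, hxD⟩
        rw [symmDiff_inter_distrib, huD] at hm
        exact inter_subset_left (hd1 hm)
    · simp only [huB, huD]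
      rw [union_inter_distrib_right]
      have e1 : st b ∩ J = ∅ := by
        rw [inter_eq_inter_inter J (hst1 b hbB), hb2]
      have e2 : su b d ∩ J = ∅ := by
        rw [inter_eq_inter_inter J (hsu1 d hdD), hd2]
      rw [e1, e2, union_empty]
    · rintro u ⟨huA', h1, h2⟩
      have hB' : u ∩ B = b := by
        apply hbu
        refine ⟨inter_subset_right, ?_, ?_⟩
        · rw [← symmDiff_inter_distrib]
          exact inter_subset_inter h1 Subset.rfl
        · apply subset_empty.1
          calc st (u ∩ B) ∩ (J ∩ B)
              ⊆ (st (u ∩ B) ∪ su (u ∩ B) (u ∩ D)) ∩ J :=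
                inter_subset_inter subset_union_left inter_subset_left
            _ = ∅ := h2
      have hD' : u ∩ D = d := by
        apply hdu
        refine ⟨inter_subset_right, ?_, ?_⟩
        · rw [← symmDiff_inter_distrib]
          exact inter_subset_inter h1 Subset.rfl
        · apply subset_empty.1
          calc su b (u ∩ D) ∩ (J ∩ D)
              ⊆ (st (u ∩ B) ∪ su (u ∩ B) (u ∩ D)) ∩ J := by
                rw [hB']
                exact inter_subset_inter subset_union_right inter_subset_left
            _ = ∅ := h2
      rw [split u huA', hB', hD']
end

section
/- Niceness is preserved under the product construction: with s(v) = s̃(v ∩ B) ∪ s_{v∩B}(v ∩ B̄), if s̃ is i-nice and s_z is i-nice, where z is the global sink of s̃, then s is i-nice. -/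
open Finset

/-- Niceness of an orientation on the subcube 2^C. -/
def IsNiceOn {n : ℕ} (C : Finset (Fin n)) (i : ℕ)
    (s : Finset (Fin n) → Finset (Fin n)) : Prop :=
  ∀ v, v ⊆ C → s v ≠ ∅ →
    ∃ u, u ⊆ C ∧ (∃ k ≤ i, USO.StepN s k v u) ∧ reachmap s u ⊂ reachmap s v

namespace PNAux

variable {n : ℕ}

lemma symmDiff_singleton_subset {v : Finset (Fin n)} {j : Fin n} {C : Finset (Fin n)}
    (hv : v ⊆ C) (hj : j ∈ C) : symmDiff v {j} ⊆ C := by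
  intro x hx
  rw [Finset.mem_symmDiff] at hx
  rcases hx with ⟨h, _⟩ | ⟨h, _⟩
  · exact hv h
  · rw [Finset.mem_singleton] at h; subst h; exact hj

lemma inter_symmDiff_of_mem {v : Finset (Fin n)} {j : Fin n} {C : Finset (Fin n)}
    (hj : j ∈ C) : symmDiff v {j} ∩ C = symmDiff (v ∩ C) {j} := by
  ext x
  by_cases hx : x = j <;>
    simp [Finset.mem_symmDiff, hx, hj] <;> tauto

lemma inter_symmDiff_of_notMem {v : Finset (Fin n)} {j : Fin n} {C : Finset (Fin n)}
    (hj : j ∉ C) : symmDiff v {j} ∩ C = v ∩ C := by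
  ext x
  by_cases hx : x = j <;>
    simp [Finset.mem_symmDiff, hx, hj] <;> tauto

lemma symmDiff_union_right {x c : Finset (Fin n)} {j : Fin n} (hj : j ∉ c) :
    symmDiff (x ∪ c) {j} = symmDiff x {j} ∪ c := by
  ext a
  by_cases ha : a = j <;>
    simp [Finset.mem_symmDiff, ha, hj] <;> tauto

lemma symmDiff_union_left {x c : Finset (Fin n)} {j : Fin n} (hj : j ∉ x) :
    symmDiff (x ∪ c) {j} = x ∪ symmDiff c {j} := by
  ext a
  by_cases ha : a = j <;>
    simp [Finset.mem_symmDiff, ha, hj] <;> tauto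

lemma inter_eq_empty_of_subset_sdiff {c A B : Finset (Fin n)} (hc : c ⊆ A \ B) :
    c ∩ B = ∅ := by
  ext x
  simp only [Finset.mem_inter, Finset.notMem_empty, iff_false, not_and]
  intro h1 h2
  exact (Finset.mem_sdiff.mp (hc h1)).2 h2

lemma union_inter_left {x c B : Finset (Fin n)} (hx : x ⊆ B) (hc : c ∩ B = ∅) :
    (x ∪ c) ∩ B = x := by
  rw [Finset.union_inter_distrib_right, Finset.inter_eq_left.mpr hx, hc, Finset.union_empty]

lemma union_inter_right {x c C : Finset (Fin n)} (hc : c ⊆ C) (hx : x ∩ C = ∅) :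
    (x ∪ c) ∩ C = c := by
  rw [Finset.union_inter_distrib_right, hx, Finset.inter_eq_left.mpr hc, Finset.empty_union]

lemma inter_sdiff_eq_empty {x A B : Finset (Fin n)} (hx : x ⊆ B) :
    x ∩ (A \ B) = ∅ := by
  ext a
  simp only [Finset.mem_inter, Finset.mem_sdiff, Finset.notMem_empty, iff_false, not_and]
  intro h1 _ h2
  exact absurd (hx h1) h2

lemma inter_union_inter {v A B : Finset (Fin n)} (hv : v ⊆ A) :
    (v ∩ B) ∪ (v ∩ (A \ B)) = v := by
  ext x
  simp only [Finset.mem_union, Finset.mem_inter, Finset.mem_sdiff]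
  constructor
  · tauto
  · intro hxv
    by_cases hb : x ∈ B
    · exact Or.inl ⟨hxv, hb⟩
    · exact Or.inr ⟨hxv, hv hxv, hb⟩

lemma reach_of_stepN {s : Finset (Fin n) → Finset (Fin n)} :
    ∀ {k v u}, USO.StepN s k v u → USO.Reach s v u := by
  intro k
  induction k with
  | zero =>
      intro v u h
      cases (show v = u from h)
      exact Relation.ReflTransGen.refl
  | succ k ih =>
      rintro v u ⟨w, hs, hn⟩
      exact Relation.ReflTransGen.head hs (ih hn)

lemma reachmap_mono {s : Finset (Fin n) → Finset (Fin n)} {v u : Finset (Fin n)}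
    (h : USO.Reach s v u) : reachmap s u ⊆ reachmap s v := by
  rintro j ⟨w, hw, hjw⟩
  exact ⟨w, h.trans hw, hjw⟩

/-- reach in a subcube-map stays in the subcube -/
lemma reach_subset {C : Finset (Fin n)} {t : Finset (Fin n) → Finset (Fin n)}
    (htC : ∀ v, v ⊆ C → t v ⊆ C) {x y : Finset (Fin n)}
    (h : USO.Reach t x y) (hx : x ⊆ C) : y ⊆ C := by
  induction h with
  | refl => exact hx
  | tail _ hs ih =>
      obtain ⟨j, hj, rfl⟩ := hs
      exact symmDiff_singleton_subset ih (htC _ ih hj)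

section Product

variable {A B : Finset (Fin n)} {st : Finset (Fin n) → Finset (Fin n)}
  {su : Finset (Fin n) → Finset (Fin n) → Finset (Fin n)}

variable (A B st su) in
def ps : Finset (Fin n) → Finset (Fin n) :=
  fun v => st (v ∩ B) ∪ su (v ∩ B) (v ∩ (A \ B))

variable (hstB : ∀ v, v ⊆ B → st v ⊆ B)
  (hsuB : ∀ u, u ⊆ B → ∀ w, w ⊆ A \ B → su u w ⊆ A \ B)
  (hBA : B ⊆ A)

include hstB hsuB in
lemma mem_ps {v : Finset (Fin n)} {j : Fin n}
    (hv : v ⊆ A) (hj : j ∈ ps A B st su v) :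
    (j ∈ B ∧ j ∈ st (v ∩ B)) ∨ (j ∈ A \ B ∧ j ∈ su (v ∩ B) (v ∩ (A \ B))) := by
  rcases Finset.mem_union.mp hj with h | h
  · exact Or.inl ⟨hstB _ Finset.inter_subset_right h, h⟩
  · exact Or.inr ⟨hsuB _ Finset.inter_subset_right _ Finset.inter_subset_right h, h⟩

include hstB hsuB hBA in
lemma proj_reach {v w : Finset (Fin n)} (hv : v ⊆ A)
    (h : USO.Reach (ps A B st su) v w) :
    w ⊆ A ∧ USO.Reach st (v ∩ B) (w ∩ B) := by
  induction h with
  | refl => exact ⟨hv, Relation.ReflTransGen.refl⟩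
  | tail _ hs ih =>
      obtain ⟨hbA, hr⟩ := ih
      obtain ⟨j, hj, rfl⟩ := hs
      rcases mem_ps hstB hsuB hbA hj with ⟨hjB, hjst⟩ | ⟨hjAB, _⟩
      · refine ⟨symmDiff_singleton_subset hbA (hBA hjB), ?_⟩
        rw [inter_symmDiff_of_mem hjB]
        exact hr.tail ⟨j, hjst, rfl⟩
      · refine ⟨symmDiff_singleton_subset hbA (Finset.mem_sdiff.mp hjAB).1, ?_⟩
        rw [inter_symmDiff_of_notMem (Finset.mem_sdiff.mp hjAB).2]
        exact hr

include hstB in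
lemma lift_step_st {x y c : Finset (Fin n)} (hx : x ⊆ B) (hc : c ⊆ A \ B)
    (h : USO.Step st x y) :
    USO.Step (ps A B st su) (x ∪ c) (y ∪ c) ∧ y ⊆ B := by
  obtain ⟨j, hj, rfl⟩ := h
  have hjB : j ∈ B := hstB _ hx hj
  have hcB : c ∩ B = ∅ := inter_eq_empty_of_subset_sdiff hc
  have hjc : j ∉ c := fun hjc => (Finset.mem_sdiff.mp (hc hjc)).2 hjB
  refine ⟨⟨j, ?_, (symmDiff_union_right hjc).symm⟩, symmDiff_singleton_subset hx hjB⟩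
  apply Finset.mem_union_left
  rw [union_inter_left hx hcB]
  exact hj

include hstB in
lemma lift_stepN_st {c : Finset (Fin n)} (hc : c ⊆ A \ B) :
    ∀ {k} {x y : Finset (Fin n)}, x ⊆ B → USO.StepN st k x y →
      USO.StepN (ps A B st su) k (x ∪ c) (y ∪ c) := by
  intro k
  induction k with
  | zero => intro x y hx h; rw [show x = y from h]; rfl
  | succ k ih =>
      rintro x y hx ⟨w, hs, hn⟩
      obtain ⟨hs', hw⟩ := lift_step_st hstB hx hc hs
      exact ⟨w ∪ c, hs', ih hw hn⟩

include hstB in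
lemma lift_reach_st {c : Finset (Fin n)} (hc : c ⊆ A \ B) {x y : Finset (Fin n)}
    (hx : x ⊆ B) (h : USO.Reach st x y) :
    USO.Reach (ps A B st su) (x ∪ c) (y ∪ c) := by
  induction h with
  | refl => exact Relation.ReflTransGen.refl
  | tail hr hs ih =>
      have hb : _ ⊆ B := reach_subset hstB hr hx
      exact ih.tail (lift_step_st hstB hb hc hs).1

include hstB hBA in
lemma reachmap_B_proj (hsuB : ∀ u, u ⊆ B → ∀ w, w ⊆ A \ B → su u w ⊆ A \ B)
    {v : Finset (Fin n)} (hv : v ⊆ A) {j : Fin n}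
    (hj : j ∈ reachmap (ps A B st su) v) (hjB : j ∈ B) :
    j ∈ reachmap st (v ∩ B) := by
  obtain ⟨w, hw, hjw⟩ := hj
  obtain ⟨hwA, hreach⟩ := proj_reach hstB hsuB hBA hv hw
  rcases mem_ps hstB hsuB hwA hjw with ⟨_, h⟩ | ⟨hmem, _⟩
  · exact ⟨w ∩ B, hreach, h⟩
  · exact absurd hjB (Finset.mem_sdiff.mp hmem).2

include hstB in
lemma reachmap_B_lift {c : Finset (Fin n)} (hc : c ⊆ A \ B) {x : Finset (Fin n)}
    (hx : x ⊆ B) {j : Fin n} (hj : j ∈ reachmap st x) :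
    j ∈ reachmap (ps A B st su) (x ∪ c) := by
  obtain ⟨y, hy, hjy⟩ := hj
  have hyB : y ⊆ B := reach_subset hstB hy hx
  refine ⟨y ∪ c, lift_reach_st hstB hc hx hy, ?_⟩
  apply Finset.mem_union_left
  rw [union_inter_left hyB (inter_eq_empty_of_subset_sdiff hc)]
  exact hjy

variable {z : Finset (Fin n)} (hz : st z = ∅) (hzB : z ⊆ B)

include hz hzB in
lemma ps_at_z {x : Finset (Fin n)} (hx : x ⊆ A \ B) :
    ps A B st su (z ∪ x) = su z x := by
  have h1 : (z ∪ x) ∩ B = z := union_inter_left hzB (inter_eq_empty_of_subset_sdiff hx)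
  have h2 : (z ∪ x) ∩ (A \ B) = x := union_inter_right hx (inter_sdiff_eq_empty hzB)
  simp [ps, h1, h2, hz]

include hz hzB hsuB in
lemma lift_step_su {x y : Finset (Fin n)} (hx : x ⊆ A \ B)
    (h : USO.Step (su z) x y) :
    USO.Step (ps A B st su) (z ∪ x) (z ∪ y) ∧ y ⊆ A \ B := by
  obtain ⟨j, hj, rfl⟩ := h
  have hjAB : j ∈ A \ B := hsuB _ hzB _ hx hj
  have hjz : j ∉ z := fun hjz => (Finset.mem_sdiff.mp hjAB).2 (hzB hjz)
  refine ⟨⟨j, ?_, (symmDiff_union_left hjz).symm⟩,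
    symmDiff_singleton_subset hx hjAB⟩
  rw [ps_at_z hz hzB hx]
  exact hj

include hz hzB hsuB in
lemma lift_stepN_su :
    ∀ {k} {x y : Finset (Fin n)}, x ⊆ A \ B → USO.StepN (su z) k x y →
      USO.StepN (ps A B st su) k (z ∪ x) (z ∪ y) := by
  intro k
  induction k with
  | zero => intro x y hx h; rw [show x = y from h]; rfl
  | succ k ih =>
      rintro x y hx ⟨w, hs, hn⟩
      obtain ⟨hs', hw⟩ := lift_step_su hsuB hz hzB hx hs
      exact ⟨z ∪ w, hs', ih hw hn⟩

include hz hzB hsuB in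
lemma lift_reach_su {x y : Finset (Fin n)} (hx : x ⊆ A \ B)
    (h : USO.Reach (su z) x y) :
    USO.Reach (ps A B st su) (z ∪ x) (z ∪ y) := by
  induction h with
  | refl => exact Relation.ReflTransGen.refl
  | tail hr hs ih =>
      have hb : _ ⊆ A \ B := reach_subset (fun w hw => hsuB z hzB w hw) hr hx
      exact ih.tail (lift_step_su hsuB hz hzB hb hs).1

include hz hzB hsuB hstB hBA in
lemma proj_reach_z {v w : Finset (Fin n)} (hv : v ⊆ A) (hvz : v ∩ B = z)
    (h : USO.Reach (ps A B st su) v w) :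
    w ⊆ A ∧ w ∩ B = z ∧ USO.Reach (su z) (v ∩ (A \ B)) (w ∩ (A \ B)) := by
  induction h with
  | refl => exact ⟨hv, hvz, Relation.ReflTransGen.refl⟩
  | tail _ hs ih =>
      obtain ⟨hbA, hbz, hr⟩ := ih
      obtain ⟨j, hj, rfl⟩ := hs
      rcases mem_ps hstB hsuB hbA hj with ⟨hjB, hjst⟩ | ⟨hjAB, hjsu⟩
      · rw [hbz, hz] at hjst
        exact absurd hjst (Finset.notMem_empty j)
      · refine ⟨symmDiff_singleton_subset hbA (Finset.mem_sdiff.mp hjAB).1, ?_, ?_⟩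
        · rw [inter_symmDiff_of_notMem (Finset.mem_sdiff.mp hjAB).2, hbz]
        · rw [inter_symmDiff_of_mem hjAB]
          rw [hbz] at hjsu
          exact hr.tail ⟨j, hjsu, rfl⟩

include hz hzB hsuB hstB hBA in
lemma reachmap_z {v : Finset (Fin n)} (hv : v ⊆ A) (hvz : v ∩ B = z) :
    reachmap (ps A B st su) v = reachmap (su z) (v ∩ (A \ B)) := by
  ext j
  constructor
  · rintro ⟨w, hw, hjw⟩
    obtain ⟨hwA, hwz, hr⟩ := proj_reach_z hstB hsuB hBA hz hzB hv hvz hw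
    refine ⟨w ∩ (A \ B), hr, ?_⟩
    have : ps A B st su w = su z (w ∩ (A \ B)) := by
      simp [ps, hwz, hz]
    rwa [this] at hjw
  · rintro ⟨y, hy, hjy⟩
    have hvd : v ∩ (A \ B) ⊆ A \ B := Finset.inter_subset_right
    have hyAB : y ⊆ A \ B := reach_subset (fun w hw => hsuB z hzB w hw) hy hvd
    have hvu : z ∪ (v ∩ (A \ B)) = v := by
      rw [← hvz]; exact inter_union_inter hv
    refine ⟨z ∪ y, ?_, ?_⟩
    · have := lift_reach_su hsuB hz hzB hvd hy
      rwa [hvu] at this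
    · rw [ps_at_z hz hzB hyAB]
      exact hjy

end Product
end PNAux

open PNAux in
/-- niceness is preserved under the product construction,
where z is the global sink of the frame USO. -/
theorem product_nice {n : ℕ} (i : ℕ) (A B : Finset (Fin n)) (hBA : B ⊆ A)
    (st : Finset (Fin n) → Finset (Fin n)) (hst : IsUSOOn B st)
    (su : Finset (Fin n) → Finset (Fin n) → Finset (Fin n))
    (hsu : ∀ u, u ⊆ B → IsUSOOn (A \ B) (su u))
    (z : Finset (Fin n)) (hzB : z ⊆ B) (hz : st z = ∅)
    (hstnice : IsNiceOn B i st) (hznice : IsNiceOn (A \ B) i (su z)) :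
    IsNiceOn A i (fun v => st (v ∩ B) ∪ su (v ∩ B) (v ∩ (A \ B))) := by
  have hstB : ∀ v, v ⊆ B → st v ⊆ B := hst.1
  have hsuB : ∀ u, u ⊆ B → ∀ w, w ⊆ A \ B → su u w ⊆ A \ B := fun u hu => (hsu u hu).1
  show IsNiceOn A i (ps A B st su)
  intro v hvA hvne
  have hvB : v ∩ B ⊆ B := Finset.inter_subset_right
  have hvAB : v ∩ (A \ B) ⊆ A \ B := Finset.inter_subset_right
  have hvu : (v ∩ B) ∪ (v ∩ (A \ B)) = v := inter_union_inter hvA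
  by_cases hb : st (v ∩ B) = ∅
  · -- frame part is the sink z; move in the fiber over z
    have hvz : v ∩ B = z := by
      obtain ⟨w, _, huniq⟩ := hst.2 B z Finset.Subset.rfl hzB
      have h1 : v ∩ B = w := huniq _ ⟨hvB, fun a ha => by
          rcases Finset.mem_symmDiff.mp ha with ⟨h, _⟩ | ⟨h, _⟩
          · exact hzB h
          · exact hvB h,
        by rw [hb]; simp⟩
      have h2 : z = w := huniq _ ⟨hzB, by simp [symmDiff_self], by rw [hz]; simp⟩
      rw [h1, h2]
    have hpsv : ps A B st su v = su z (v ∩ (A \ B)) := by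
      simp [ps, hvz, hz]
    have hne : su z (v ∩ (A \ B)) ≠ ∅ := by
      rw [← hpsv]; exact hvne
    obtain ⟨u, huAB, ⟨k, hk, hstep⟩, hss⟩ := hznice _ hvAB hne
    refine ⟨z ∪ u, ?_, ⟨k, hk, ?_⟩, ?_⟩
    · exact Finset.union_subset (hzB.trans hBA) (huAB.trans (Finset.sdiff_subset))
    · have h := lift_stepN_su hsuB hz hzB hvAB hstep
      have hveq : z ∪ (v ∩ (A \ B)) = v := by rw [← hvz]; exact hvu
      rwa [hveq] at h
    · have hzuA : z ∪ u ⊆ A :=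
        Finset.union_subset (hzB.trans hBA) (huAB.trans (Finset.sdiff_subset))
      have h1 : (z ∪ u) ∩ B = z := union_inter_left hzB (inter_eq_empty_of_subset_sdiff huAB)
      have h2 : (z ∪ u) ∩ (A \ B) = u := union_inter_right huAB (inter_sdiff_eq_empty hzB)
      rw [reachmap_z hstB hsuB hBA hz hzB hzuA h1,
          reachmap_z hstB hsuB hBA hz hzB hvA hvz, h2]
      exact hss
  · -- move in the frame
    obtain ⟨u, huB, ⟨k, hk, hstep⟩, hss⟩ := hstnice _ hvB hb
    refine ⟨u ∪ (v ∩ (A \ B)), ?_, ⟨k, hk, ?_⟩, ?_⟩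
    · exact Finset.union_subset (huB.trans hBA) (hvAB.trans Finset.sdiff_subset)
    · have := lift_stepN_st (su := su) hstB hvAB hvB hstep
      rwa [hvu] at this
    · have huA : u ∪ (v ∩ (A \ B)) ⊆ A :=
        Finset.union_subset (huB.trans hBA) (hvAB.trans Finset.sdiff_subset)
      have huI : (u ∪ (v ∩ (A \ B))) ∩ B = u :=
        union_inter_left huB (inter_eq_empty_of_subset_sdiff hvAB)
      have hreach : USO.Reach (ps A B st su) v (u ∪ (v ∩ (A \ B))) := by
        have := reach_of_stepN (lift_stepN_st (su := su) hstB hvAB hvB hstep)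
        rwa [hvu] at this
      obtain ⟨j, hj1, hj2⟩ := Set.exists_of_ssubset hss
      have hjB : j ∈ B := by
        obtain ⟨w, hw, hjw⟩ := hj1
        exact hstB _ (reach_subset hstB hw hvB) hjw
      rw [Set.ssubset_def]
      refine ⟨reachmap_mono hreach, fun hle => ?_⟩
      have hjv : j ∈ reachmap (ps A B st su) v := by
        have := reachmap_B_lift (su := su) hstB hvAB hvB hj1
        rwa [hvu] at this
      have : j ∈ reachmap st ((u ∪ (v ∩ (A \ B))) ∩ B) :=
        reachmap_B_proj hstB hBA hsuB huA (hle hjv) hjB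
      rw [huI] at this
      exact hj2 this
end

section
/- Hypersink reorientation: Let B ⊆ A, and let s be a USO on 2^A such that s(v) ∩ (A∖B) = ∅ for all v in the subcube Q^B = F_{B,∅}. If s̃ is any USO on 2^B, then the orientation s' defined by s'(v) = s̃(v ∩ B) for v ∈ Q^B and s'(v) = s(v) otherwise, is a USO on 2^A. -/
open Finset

/-- hypersink reorientation. -/
theorem hypersink_reorientation {n : ℕ} (A B : Finset (Fin n)) (hBA : B ⊆ A)
    (s : Finset (Fin n) → Finset (Fin n)) (hs : IsUSOOn A s)
    (hhyp : ∀ v, v ⊆ B → s v ∩ (A \ B) = ∅)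
    (st : Finset (Fin n) → Finset (Fin n)) (hst : IsUSOOn B st) :
    IsUSOOn A (fun v => if v ⊆ B then st v else s v) := by

  obtain ⟨hs1, hs2⟩ := hs
  obtain ⟨hst1, hst2⟩ := hst
  constructor
  · intro v hv
    by_cases h : v ⊆ B
    · simpa [h] using (hst1 v h).trans hBA
    · simpa [h] using hs1 v hv
  intro J v hJ hv
  by_cases hcase : v \ J ⊆ B
  · -- face meets the hypersink subcube
    set v' := v ∩ B with hv'def
    have hv'B : v' ⊆ B := inter_subset_right
    have hvv' : symmDiff v v' ⊆ J := by
      intro x hx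
      rw [Finset.mem_symmDiff] at hx
      rcases hx with ⟨hxv, hxv'⟩ | ⟨hxv', hxv⟩
      · by_contra hxJ
        exact hxv' (mem_inter.mpr ⟨hxv, hcase (mem_sdiff.mpr ⟨hxv, hxJ⟩)⟩)
      · exact absurd (mem_of_mem_inter_left hxv') hxv
    -- sink of the subface w.r.t. st
    obtain ⟨w₀, ⟨hw₀B, hw₀d, hw₀s⟩, hw₀u⟩ :=
      hst2 (J ∩ B) v' inter_subset_right hv'B
    -- sink of the subface w.r.t. s : it is the global sink of the face w.r.t. s
    obtain ⟨z₀, ⟨hz₀A, hz₀d, hz₀s⟩, _⟩ :=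
      hs2 (J ∩ B) v' ((inter_subset_left).trans hJ) (hv'B.trans hBA)
    have hz₀B : z₀ ⊆ B := by
      intro x hx
      by_cases hxv : x ∈ v'
      · exact hv'B hxv
      · have : x ∈ symmDiff v' z₀ := Finset.mem_symmDiff.mpr (Or.inr ⟨hx, hxv⟩)
        exact mem_of_mem_inter_right (hz₀d this)
    have hz₀sJ : s z₀ ∩ J = ∅ := by
      ext x
      simp only [mem_inter, notMem_empty, iff_false, not_and]
      intro hxs hxJ
      by_cases hxB : x ∈ B
      · have : x ∈ s z₀ ∩ (J ∩ B) := mem_inter.mpr ⟨hxs, mem_inter.mpr ⟨hxJ, hxB⟩⟩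
        simp [hz₀s] at this
      · have hxA : x ∈ A := hs1 z₀ hz₀A hxs
        have : x ∈ s z₀ ∩ (A \ B) := mem_inter.mpr ⟨hxs, mem_sdiff.mpr ⟨hxA, hxB⟩⟩
        simp [hhyp z₀ hz₀B] at this
    obtain ⟨u₀, hu₀, hu₀u⟩ := hs2 J v hJ hv
    have hz₀u₀ : z₀ = u₀ := by
      apply hu₀u
      refine ⟨hz₀A, ?_, hz₀sJ⟩
      calc symmDiff v z₀ ⊆ symmDiff v v' ∪ symmDiff v' z₀ := symmDiff_triangle v v' z₀
        _ ⊆ J := union_subset hvv' (hz₀d.trans inter_subset_left)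
    have hu₀B : u₀ ⊆ B := hz₀u₀ ▸ hz₀B
    -- w₀ is the unique sink of the face w.r.t. the new orientation
    refine ⟨w₀, ⟨hw₀B.trans hBA, ?_, ?_⟩, ?_⟩
    · calc symmDiff v w₀ ⊆ symmDiff v v' ∪ symmDiff v' w₀ := symmDiff_triangle v v' w₀
        _ ⊆ J := union_subset hvv' (hw₀d.trans inter_subset_left)
    · simp only [hw₀B, if_true]
      ext x
      simp only [mem_inter, notMem_empty, iff_false, not_and]
      intro hxs hxJ
      have hxB : x ∈ B := hst1 w₀ hw₀B hxs
      have : x ∈ st w₀ ∩ (J ∩ B) := mem_inter.mpr ⟨hxs, mem_inter.mpr ⟨hxJ, hxB⟩⟩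
      simp [hw₀s] at this
    · rintro u ⟨huA, hud, hus⟩
      by_cases huB : u ⊆ B
      · simp only [huB, if_true] at hus
        apply hw₀u
        have h1 : symmDiff v' u ⊆ J := by
          calc symmDiff v' u ⊆ symmDiff v' v ∪ symmDiff v u := symmDiff_triangle v' v u
            _ ⊆ J := union_subset (by rw [symmDiff_comm]; exact hvv') hud
        refine ⟨huB, ?_, ?_⟩
        · intro x hx
          refine mem_inter.mpr ⟨h1 hx, ?_⟩
          rcases Finset.mem_symmDiff.mp hx with ⟨h2, _⟩ | ⟨h2, _⟩
          · exact hv'B h2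
          · exact huB h2
        · have h2 : st u ∩ (J ∩ B) ⊆ st u ∩ J :=
            inter_subset_inter Subset.rfl inter_subset_left
          rw [hus] at h2
          exact subset_empty.mp h2
      · simp only [huB, if_false] at hus
        have : u = u₀ := hu₀u u ⟨huA, hud, hus⟩
        exact absurd (this ▸ huB) (by simp [this, hu₀B])
  · -- face disjoint from the hypersink subcube
    obtain ⟨u₀, ⟨hu₀A, hu₀d, hu₀s⟩, hu₀u⟩ := hs2 J v hJ hv
    have hnB : ∀ u : Finset (Fin n), symmDiff v u ⊆ J → ¬ u ⊆ B := by
      intro u hud huB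
      apply hcase
      intro x hx
      rw [mem_sdiff] at hx
      by_cases hxu : x ∈ u
      · exact huB hxu
      · exact absurd (hud (Finset.mem_symmDiff.mpr (Or.inl ⟨hx.1, hxu⟩))) hx.2
    refine ⟨u₀, ⟨hu₀A, hu₀d, by simp [hnB u₀ hu₀d, hu₀s]⟩, ?_⟩
    rintro u ⟨huA, hud, hus⟩
    simp only [hnB u hud, if_false] at hus
    exact hu₀u u ⟨huA, hud, hus⟩
end

section
/- Flipping an edge of a USO preserves the USO property: if ψ is a USO and v, u = v ⊕ {j} are such that s_ψ(v) ∖ {j} = s_ψ(u) ∖ {j}, then reversing the orientation of the edge {v,u} yields again a USO. -/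
open Finset

/-- flipping a flippable edge of a USO yields a USO. -/
theorem flip_edge_uso {n : ℕ} (s : Finset (Fin n) → Finset (Fin n))
    (hs : IsUSO s) (v : Finset (Fin n)) (j : Fin n)
    (hflip : s v \ {j} = s (symmDiff v {j}) \ {j}) :
    IsUSO (fun w => if w = v ∨ w = symmDiff v {j} then symmDiff (s w) {j} else s w) := by
  classical
  set u : Finset (Fin n) := symmDiff v {j} with hu
  have hcancel : ∀ A : Finset (Fin n), symmDiff (symmDiff A {j}) {j} = A := by
    intro A; rw [symmDiff_assoc, symmDiff_self, symmDiff_bot]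
  have hvu : v ≠ u := by
    intro h
    have h2 : ({j} : Finset (Fin n)) = ∅ := by
      have := symmDiff_symmDiff_cancel_left v ({j} : Finset (Fin n))
      rw [← hu, ← h, symmDiff_self] at this
      simpa using this.symm
    exact Finset.singleton_ne_empty j h2
  have hvj : symmDiff u {j} = v := by rw [hu, hcancel]
  have hsing : ∀ t : Finset (Fin n), t ∩ {j} = ∅ ↔ j ∉ t := by
    intro t
    simp [Finset.eq_empty_iff_forall_notMem]
  have hj : j ∈ s v ↔ j ∉ s u := by
    obtain ⟨w, ⟨hw1, hw2⟩, hun⟩ := hs {j} v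
    have hw' : w = v ∨ w = u := by
      rcases Finset.subset_singleton_iff.mp hw1 with h | h
      · left
        exact (symmDiff_eq_bot.mp (by rw [Finset.bot_eq_empty]; exact h)).symm
      · right
        rw [hu, ← h, symmDiff_symmDiff_cancel_left]
    constructor
    · intro hjv
      rcases hw' with h | h
      · exact absurd ((hsing _).mp hw2) (by rw [h]; exact fun h' => h' hjv)
      · rw [← h]; exact (hsing _).mp hw2
    · intro hju
      by_contra hjv
      have hv : symmDiff v v ⊆ {j} ∧ s v ∩ {j} = ∅ := by
        constructor
        · simp
        · exact (hsing _).mpr hjv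
      have hvw : v = w := hun v hv
      have hu' : symmDiff v u ⊆ {j} ∧ s u ∩ {j} = ∅ := by
        constructor
        · rw [hu, symmDiff_symmDiff_cancel_left]
        · exact (hsing _).mpr hju
      have huw : u = w := hun u hu'
      exact hvu (hvw.trans huw.symm)
  have hout : ∀ k, k ≠ j → (k ∈ s v ↔ k ∈ s u) := by
    intro k hk
    have := congrArg (fun t => k ∈ t) hflip
    simpa [Finset.mem_sdiff, hk] using this
  have hsv : symmDiff (s v) {j} = s u := by
    ext k
    by_cases hk : k = j
    · rw [hk]
      by_cases h1 : j ∈ s v <;> by_cases h2 : j ∈ s u <;>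
        simp_all [Finset.mem_symmDiff]
    · simp [Finset.mem_symmDiff, hk, hout k hk]
  have hsu : symmDiff (s u) {j} = s v := by
    rw [← hsv, hcancel]
  -- the swap map
  set σ : Finset (Fin n) → Finset (Fin n) :=
    fun w => if w = v then u else if w = u then v else w with hσ
  have hσv : σ v = u := by simp [hσ]
  have hσu : σ u = v := by simp [hσ, hvu.symm]
  have hσσ : ∀ w, σ (σ w) = w := by
    intro w
    by_cases h1 : w = v
    · rw [h1, hσv, hσu]
    · by_cases h2 : w = u
      · rw [h2, hσu, hσv]
      · simp [hσ, h1, h2]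
  have hσw : ∀ w, σ w = w ∨ σ w = symmDiff w {j} := by
    intro w
    by_cases h1 : w = v
    · right; rw [h1, hσv, hu]
    · by_cases h2 : w = u
      · right; rw [h2, hσu, hvj]
      · left; simp [hσ, h1, h2]
  have hkey : ∀ w,
      (if w = v ∨ w = u then symmDiff (s w) {j} else s w) = s (σ w) := by
    intro w
    by_cases h1 : w = v
    · rw [h1, hσv]; simp [hsv]
    · by_cases h2 : w = u
      · rw [h2, hσu]; simp [h1, hsu]
      · simp [hσ, h1, h2]
  intro J v'
  by_cases hJ : j ∈ J
  · -- face lemma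
    have hface : ∀ A : Finset (Fin n), symmDiff A {j} ⊆ J ↔ A ⊆ J := by
      intro A
      have h1 : ∀ B : Finset (Fin n), B ⊆ J → symmDiff B {j} ⊆ J := by
        intro B hB x hx
        rcases Finset.mem_symmDiff.mp hx with ⟨h, _⟩ | ⟨h, _⟩
        · exact hB h
        · rw [Finset.mem_singleton] at h; subst h; exact hJ
      constructor
      · intro h
        have := h1 _ h
        rwa [hcancel] at this
      · exact h1 A
    have hfaceσ : ∀ w, symmDiff v' (σ w) ⊆ J ↔ symmDiff v' w ⊆ J := by
      intro w
      rcases hσw w with h | h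
      · rw [h]
      · rw [h, ← symmDiff_assoc, hface]
    obtain ⟨w₀, hw₀, hun⟩ := hs J v'
    refine ⟨σ w₀, ⟨?_, ?_⟩, ?_⟩
    · exact (hfaceσ w₀).mpr hw₀.1
    · show (if σ w₀ = v ∨ σ w₀ = u then symmDiff (s (σ w₀)) {j} else s (σ w₀)) ∩ J = ∅
      rw [hkey (σ w₀), hσσ]
      exact hw₀.2
    · intro y hy
      obtain ⟨hy1, hy2⟩ := hy
      have hy2' : s (σ y) ∩ J = ∅ := by
        rw [← hkey y]
        exact hy2
      have : σ y = w₀ := hun (σ y) ⟨(hfaceσ y).mpr hy1, hy2'⟩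
      rw [← hσσ y, this]
  · -- j ∉ J : sinks unchanged
    have hint : ∀ B : Finset (Fin n), symmDiff B {j} ∩ J = B ∩ J := by
      intro B
      ext k
      simp only [Finset.mem_inter, Finset.mem_symmDiff, Finset.mem_singleton]
      constructor
      · rintro ⟨h, hk⟩
        rcases h with ⟨h1, _⟩ | ⟨h1, _⟩
        · exact ⟨h1, hk⟩
        · subst h1; exact absurd hk hJ
      · rintro ⟨h1, hk⟩
        refine ⟨Or.inl ⟨h1, ?_⟩, hk⟩
        rintro rfl; exact hJ hk
    have hsame : ∀ w,
        (if w = v ∨ w = u then symmDiff (s w) {j} else s w) ∩ J = s w ∩ J := by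
      intro w
      split_ifs with h
      · exact hint (s w)
      · rfl
    obtain ⟨w₀, hw₀, hun⟩ := hs J v'
    refine ⟨w₀, ⟨hw₀.1, ?_⟩, ?_⟩
    · show (if w₀ = v ∨ w₀ = u then symmDiff (s w₀) {j} else s w₀) ∩ J = ∅
      rw [hsame]
      exact hw₀.2
    · intro y hy
      obtain ⟨hy1, hy2⟩ := hy
      apply hun
      refine ⟨hy1, ?_⟩
      rw [← hsame y]
      exact hy2
end

section
/- Every flip-matching orientation of the n-cube is a USO: starting from the uniform orientation (all edges directed forward, i.e., j ∈ s(v) iff j ∉ v), reversing the edges of any matching of the hypercube graph yields a unique sink orientation. -/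
open Finset

/-- every flip-matching orientation of the n-cube is a USO:
reversing the edges of a matching in the forward uniform orientation yields a USO.
An edge is encoded as a pair (v, j) with endpoints v and v ∆ {j}. -/
theorem flip_matching_orientation_uso {n : ℕ}
    (M : Set (Finset (Fin n) × Fin n))
    (hM : ∀ e ∈ M, ∀ e' ∈ M, e ≠ e' →
      ({e.1, symmDiff e.1 {e.2}} : Set (Finset (Fin n))) ∩
        {e'.1, symmDiff e'.1 {e'.2}} = ∅)
    (s : Finset (Fin n) → Finset (Fin n))
    (hs : ∀ v j, j ∈ s v ↔
      (j ∉ v ↔ ¬((v, j) ∈ M ∨ (symmDiff v {j}, j) ∈ M))) :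
    IsUSO s := by
  classical
  set F : Finset (Fin n) → Fin n → Prop :=
    fun u j => (u, j) ∈ M ∨ (symmDiff u {j}, j) ∈ M with hF
  have invol : ∀ (u : Finset (Fin n)) (j : Fin n),
      symmDiff (symmDiff u {j}) {j} = u := fun u j =>
    symmDiff_symmDiff_cancel_right {j} u
  -- matched edges through a common vertex coincide
  have key : ∀ e ∈ M, ∀ e' ∈ M, ∀ x : Finset (Fin n),
      (x = e.1 ∨ x = symmDiff e.1 {e.2}) →
      (x = e'.1 ∨ x = symmDiff e'.1 {e'.2}) → e = e' := by
    intro e he e' he' x hx hx'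
    by_contra hne
    have hmem : x ∈ (({e.1, symmDiff e.1 {e.2}} : Set (Finset (Fin n))) ∩
        {e'.1, symmDiff e'.1 {e'.2}}) := by
      constructor <;> simp only [Set.mem_insert_iff, Set.mem_singleton_iff]
      · exact hx
      · exact hx'
    rw [hM e he e' he' hne] at hmem
    exact hmem
  -- no two distinct flipped edges at a common vertex
  have noTwo : ∀ (u : Finset (Fin n)) (j k : Fin n), F u j → F u k → j = k := by
    intro u j k hj hk
    have hj' : ∃ e ∈ M, e.2 = j ∧ (u = e.1 ∨ u = symmDiff e.1 {e.2}) := by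
      rcases hj with h | h
      · exact ⟨(u, j), h, rfl, Or.inl rfl⟩
      · exact ⟨(symmDiff u {j}, j), h, rfl, Or.inr (invol u j).symm⟩
    have hk' : ∃ e ∈ M, e.2 = k ∧ (u = e.1 ∨ u = symmDiff e.1 {e.2}) := by
      rcases hk with h | h
      · exact ⟨(u, k), h, rfl, Or.inl rfl⟩
      · exact ⟨(symmDiff u {k}, k), h, rfl, Or.inr (invol u k).symm⟩
    obtain ⟨e, he, he2, hxe⟩ := hj'
    obtain ⟨e', he', he2', hxe'⟩ := hk'
    have := key e he e' he' u hxe hxe'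
    rw [← he2, ← he2', this]
  have flipFlip : ∀ (u : Finset (Fin n)) (j : Fin n),
      F (symmDiff u {j}) j ↔ F u j := by
    intro u j
    simp only [hF, invol]
    exact or_comm
  -- sink characterization
  have hmem : ∀ (u : Finset (Fin n)) j, j ∉ s u ↔ (j ∉ u ↔ F u j) := by
    intro u j
    rw [hs]
    simp only [hF]
    tauto
  intro J v
  have sinkIff : ∀ u : Finset (Fin n),
      (s u ∩ J = ∅) ↔ ∀ j ∈ J, (j ∉ u ↔ F u j) := by
    intro u
    rw [Finset.eq_empty_iff_forall_notMem]
    constructor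
    · intro h j hj
      rw [← hmem u j]
      intro hjs
      exact h j (Finset.mem_inter.mpr ⟨hjs, hj⟩)
    · intro h j hj
      rw [Finset.mem_inter] at hj
      exact ((hmem u j).mpr (h j hj.2)) hj.1
  set t : Finset (Fin n) := v ∪ J with htdef
  have houtside : ∀ u : Finset (Fin n), symmDiff v u ⊆ J →
      ∀ i, i ∉ J → (i ∈ u ↔ i ∈ v) := by
    intro u hsub i hi
    constructor <;> intro h <;> by_contra h'
    · exact hi (hsub (Finset.mem_symmDiff.mpr (Or.inr ⟨h, h'⟩)))
    · exact hi (hsub (Finset.mem_symmDiff.mpr (Or.inl ⟨h, h'⟩)))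
  have shape : ∀ u : Finset (Fin n), symmDiff v u ⊆ J →
      (∀ j ∈ J, (j ∉ u ↔ F u j)) →
      u = t ∨ ∃ j ∈ J, j ∉ u ∧ u = symmDiff t {j} := by
    intro u hsub hsink
    by_cases hJu : J ⊆ u
    · left
      ext i
      by_cases hiJ : i ∈ J
      · simp [htdef, Finset.mem_union, hiJ, hJu hiJ]
      · rw [houtside u hsub i hiJ]
        simp [htdef, Finset.mem_union, hiJ]
    · right
      obtain ⟨j, hjJ, hju⟩ := Finset.not_subset.mp hJu
      refine ⟨j, hjJ, hju, ?_⟩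
      have hjt : j ∈ t := Finset.mem_union_right _ hjJ
      ext i
      rw [Finset.mem_symmDiff, Finset.mem_singleton]
      by_cases hij : i = j
      · subst hij
        simp [hju, hjt]
      · simp only [hij, not_false_iff, and_true, Finset.mem_singleton]
        by_cases hiJ : i ∈ J
        · have hiu : i ∈ u := by
            by_contra hiu
            have h1 : F u i := (hsink i hiJ).mp hiu
            have h2 : F u j := (hsink j hjJ).mp hju
            exact hij (noTwo u i j h1 h2)
          have hit : i ∈ t := Finset.mem_union_right _ hiJ
          simp [hiu, hit]
        · rw [houtside u hsub i hiJ]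
          simp [htdef, Finset.mem_union, hiJ]
  by_cases hcase : ∃ j ∈ J, F t j
  · obtain ⟨j0, hj0J, hFj0⟩ := hcase
    have hj0t : j0 ∈ t := Finset.mem_union_right _ hj0J
    refine ⟨symmDiff t {j0}, ⟨?_, ?_⟩, ?_⟩
    · -- face membership
      intro i hi
      by_contra hiJ
      have hij0 : i ≠ j0 := fun h => hiJ (h ▸ hj0J)
      rw [Finset.mem_symmDiff] at hi
      have hiu : i ∈ symmDiff t {j0} ↔ i ∈ v := by
        rw [Finset.mem_symmDiff, Finset.mem_singleton]
        simp only [hij0, not_false_iff, and_true]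
        simp [htdef, Finset.mem_union, hiJ]
      rcases hi with ⟨h1, h2⟩ | ⟨h1, h2⟩
      · exact h2 (hiu.mpr h1)
      · exact h2 (hiu.mp h1)
    · rw [sinkIff]
      intro j hjJ
      by_cases hjj0 : j = j0
      · subst hjj0
        have hnot : j ∉ symmDiff t {j} := by
          rw [Finset.mem_symmDiff]
          simp [hj0t]
        exact iff_of_true hnot ((flipFlip t j).mpr hFj0)
      · have hj : j ∈ symmDiff t {j0} := by
          rw [Finset.mem_symmDiff, Finset.mem_singleton]
          exact Or.inl ⟨Finset.mem_union_right _ hjJ, hjj0⟩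
        refine iff_of_false (fun h => h hj) ?_
        intro hFj
        have hFj0' : F (symmDiff t {j0}) j0 := (flipFlip t j0).mpr hFj0
        exact hjj0 (noTwo _ j j0 hFj hFj0')
    · -- uniqueness
      rintro u ⟨hsub, hsink⟩
      rw [sinkIff] at hsink
      rcases shape u hsub hsink with rfl | ⟨j, hjJ, hju, rfl⟩
      · exfalso
        have : j0 ∉ t ↔ F t j0 := hsink j0 hj0J
        exact (this.mpr hFj0) hj0t
      · have hFt : F t j := (flipFlip t j).mp ((hsink j hjJ).mp hju)
        rw [noTwo t j j0 hFt hFj0]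
  · push_neg at hcase
    refine ⟨t, ⟨?_, ?_⟩, ?_⟩
    · intro i hi
      rw [Finset.mem_symmDiff] at hi
      rcases hi with ⟨h1, h2⟩ | ⟨h1, h2⟩
      · exact absurd (Finset.mem_union_left _ h1) h2
      · rcases Finset.mem_union.mp h1 with h | h
        · exact absurd h h2
        · exact h
    · rw [sinkIff]
      intro j hjJ
      have hjt : j ∈ t := Finset.mem_union_right _ hjJ
      exact iff_of_false (fun h => h hjt) (hcase j hjJ)
    · rintro u ⟨hsub, hsink⟩
      rw [sinkIff] at hsink
      rcases shape u hsub hsink with rfl | ⟨j, hjJ, hju, rfl⟩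
      · rfl
      · exfalso
        exact hcase j hjJ ((flipFlip t j).mp ((hsink j hjJ).mp hju))
end

section
/- For every n there exists a (cyclic) USO ψ of the n-cube that is not i-nice for any i < n; concretely, one can construct ψ so that every vertex except the global sink has full reachmap [n], whence the vertex antipodal to the sink is only n-covered. -/
open Finset

/-!
Reverse a matching of edges of the uniform orientation `v ↦ vᶜ`. Distinct vertices `u, v` still
satisfy the Szabó–Welzl condition `(u ∆ v) ∩ (s u ∆ s v) ≠ ∅`: a violation would need two matching
edges through a common vertex. So the result is a USO. Reversing the edges `{k}ᶜ — {k, k + 1}ᶜ`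
creates the directed cycle `{0}ᶜ → {0, 1}ᶜ → {1}ᶜ → ⋯` through all vertices of weight `n - 1`;
every vertex except the sink `univ` climbs to it, and coordinate `k` is outgoing at `{k}ᶜ`. Hence all
non-sink vertices have full reachmap, and no path of length `i < n` from `∅` reaches the sink.
-/

open scoped symmDiff

namespace USO

variable {n : ℕ}

/-- Szabó–Welzl: on each face `u ↦ s u ∩ J` is injective, hence onto the subsets of `J`, and the
preimage of `∅` is the unique sink. -/
theorem isUSO_of_inter_symmDiff_nonempty {s : Finset (Fin n) → Finset (Fin n)}
    (h : ∀ u v, u ≠ v → (u ∆ v ∩ s u ∆ s v).Nonempty) : IsUSO s := by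
  intro J v
  set F : Finset (Finset (Fin n)) := {u | v ∆ u ⊆ J}
  have hinj : Set.InjOn (fun u => s u ∩ J) F := by
    intro u hu u' hu' heq
    by_contra hne
    obtain ⟨j, hj⟩ := h u u' hne
    simp only [F, coe_filter, mem_univ, true_and, Set.mem_ofPred_eq] at hu hu'
    have hjJ : j ∈ J := by
      have : j ∈ v ∆ u ∨ j ∈ v ∆ u' := by
        simp only [mem_inter, mem_symmDiff] at hj ⊢
        tauto
      exact this.elim (@hu j) (@hu' j)
    have := congrArg (j ∈ ·) heq
    simp only [mem_inter, mem_symmDiff, hjJ, and_true] at this hj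
    tauto
  have hcard : #F = #J.powerset := by
    refine card_nbij' (v ∆ ·) (v ∆ ·) ?_ ?_ ?_ ?_ <;> intro u hu <;>
      simp_all [F, symmDiff_symmDiff_cancel_left, -coe_symmDiff]
  have himage : F.image (fun u => s u ∩ J) = J.powerset :=
    eq_of_subset_of_card_le (image_subset_iff.2 fun u _ => mem_powerset.2 inter_subset_right)
      (by rw [card_image_of_injOn hinj, hcard])
  obtain ⟨u, hu, hsink⟩ := mem_image.1 (himage ▸ empty_mem_powerset J)
  exact ⟨u, ⟨(mem_filter.1 hu).2, hsink⟩, fun u' hu' =>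
    hinj (mem_filter.2 ⟨mem_univ _, hu'.1⟩) hu (hu'.2.trans hsink.symm)⟩

theorem card_le_add_of_stepN {s : Finset (Fin n) → Finset (Fin n)} :
    ∀ {k : ℕ} {v u : Finset (Fin n)}, StepN s k v u → #u ≤ #v + k
  | 0, _, _, rfl => le_rfl
  | k + 1, v, u, ⟨_, ⟨j, _, rfl⟩, hpath⟩ =>
    calc #u ≤ #(v ∆ {j}) + k := card_le_add_of_stepN hpath
      _ ≤ #v + 1 + k := by
        gcongr
        exact (card_le_card symmDiff_subset_union).trans (card_union_le _ _)
      _ = #v + (k + 1) := by ring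

/-- The uniform orientation with sink `univ`, with the edges at `v` in the directions `D v`
reversed. -/
def uniformFlip (D : Finset (Fin n) → Finset (Fin n)) (v : Finset (Fin n)) : Finset (Fin n) :=
  vᶜ ∆ D v

/-- `j ∈ D v` says that the edge `{v, v ∆ {j}}` belongs to a matching of the cube. -/
structure IsEdgeMatching (D : Finset (Fin n) → Finset (Fin n)) : Prop where
  mem_symmDiff_singleton : ∀ v j, j ∈ D v → j ∈ D (v ∆ {j})
  card_le_one : ∀ v, #(D v) ≤ 1

namespace IsEdgeMatching

variable {D : Finset (Fin n) → Finset (Fin n)}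

theorem eq_singleton (hD : IsEdgeMatching D) {v : Finset (Fin n)} {j : Fin n} (hj : j ∈ D v) :
    D v = {j} :=
  eq_singleton_iff_unique_mem.2 ⟨hj, fun _ hi => card_le_one_iff.1 (hD.card_le_one v) hi hj⟩

theorem not_symmDiff_subset_of_mem (hD : IsEdgeMatching D) {u v : Finset (Fin n)} {j : Fin n}
    (hj : j ∈ u ∆ v) (hju : j ∈ D u) (hjv : j ∉ D v) : ¬ u ∆ v ⊆ D u ∆ D v := by
  intro hsub
  by_cases hsingle : u ∆ v = {j}
  · refine hjv ?_
    rw [← symmDiff_symmDiff_cancel_left u v, hsingle]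
    exact hD.mem_symmDiff_singleton u j hju
  obtain ⟨i, hi, hij⟩ : ∃ i ∈ u ∆ v, i ≠ j := by
    by_contra! h
    exact hsingle (eq_singleton_iff_unique_mem.2 ⟨hj, h⟩)
  have hDu := hD.eq_singleton hju
  have hiv : i ∈ D v := by
    have := hsub hi
    simp only [mem_symmDiff, hDu, mem_singleton, hij, false_and, false_or] at this
    exact this.1
  have hDv := hD.eq_singleton hiv
  -- the two matching edges `{u, u ∆ {j}}` and `{v, v ∆ {i}}` share the vertex `u ∆ {j}`
  have hw : u ∆ {j} = v ∆ {i} := by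
    have hmem : ∀ x, x ∈ u ∆ v ↔ x = i ∨ x = j := by
      intro x
      refine ⟨fun hx => ?_, by rintro (rfl | rfl) <;> assumption⟩
      have := hsub hx
      simp only [mem_symmDiff, hDu, hDv, mem_singleton] at this
      tauto
    ext x
    have := hmem x
    simp only [mem_symmDiff, mem_singleton] at this ⊢
    by_cases hxi : x = i <;> by_cases hxj : x = j <;> simp_all <;> tauto
  have := hD.mem_symmDiff_singleton v i hiv
  rw [← hw, hD.eq_singleton (hD.mem_symmDiff_singleton u j hju)] at this
  exact hij (mem_singleton.1 this)

theorem isUSO (hD : IsEdgeMatching D) : IsUSO (uniformFlip D) := by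
  refine isUSO_of_inter_symmDiff_nonempty fun u v huv => ?_
  by_contra hempty
  -- `uniformFlip D u ∆ uniformFlip D v = (u ∆ v) ∆ (D u ∆ D v)`
  have hsub : u ∆ v ⊆ D u ∆ D v := by
    intro x hx
    have hx' : x ∉ uniformFlip D u ∆ uniformFlip D v := fun h => hempty ⟨x, mem_inter.2 ⟨hx, h⟩⟩
    simp only [uniformFlip, mem_symmDiff, mem_compl] at hx hx' ⊢
    tauto
  obtain ⟨j, hj⟩ := symmDiff_nonempty.2 huv
  rcases mem_symmDiff.1 (hsub hj) with ⟨hju, hjv⟩ | ⟨hjv, hju⟩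
  · exact hD.not_symmDiff_subset_of_mem hj hju hjv hsub
  · rw [symmDiff_comm u] at hj hsub
    rw [symmDiff_comm (D u)] at hsub
    exact hD.not_symmDiff_subset_of_mem hj hjv hju hsub

theorem exists_mem_uniformFlip_notMem (hD : IsEdgeMatching D) {v : Finset (Fin n)}
    (hv : 2 ≤ #vᶜ) : ∃ j ∉ v, j ∈ uniformFlip D v := by
  obtain ⟨j, hj⟩ : (vᶜ \ D v).Nonempty := by
    rw [← card_pos]
    have := le_card_sdiff (D v) vᶜ
    have := hD.card_le_one v
    omega
  rw [mem_sdiff, mem_compl] at hj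
  exact ⟨j, hj.1, by simp [uniformFlip, mem_symmDiff, hj.1, hj.2]⟩

theorem exists_reach_compl_singleton (hD : IsEdgeMatching D) {v : Finset (Fin n)}
    (hv : v ≠ univ) : ∃ k, Reach (uniformFlip D) v {k}ᶜ := by
  obtain ⟨m, hm⟩ : ∃ m, #vᶜ = m + 1 :=
    Nat.exists_eq_succ_of_ne_zero (by simpa [card_eq_zero, compl_eq_empty_iff] using hv)
  clear hv
  induction m generalizing v with
  | zero =>
    obtain ⟨k, hk⟩ := card_eq_one.1 hm
    exact ⟨k, by rw [← hk, compl_compl]; exact .refl⟩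
  | succ m ih =>
    obtain ⟨j, hjv, hj⟩ := hD.exists_mem_uniformFlip_notMem (v := v) (by omega)
    have hstep : Step (uniformFlip D) v (insert j v) := ⟨j, hj, by
      ext x
      by_cases hx : x = j <;> simp_all [mem_symmDiff]⟩
    obtain ⟨k, hk⟩ := ih (v := insert j v)
      (by rw [compl_insert, card_erase_of_mem (mem_compl.2 hjv), hm]; rfl)
    exact ⟨k, .head hstep hk⟩

end IsEdgeMatching

section Cycle

variable [NeZero n]

theorem fin_one_ne_zero (hn : 2 ≤ n) : (1 : Fin n) ≠ 0 := fun h => by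
  simpa [Nat.mod_eq_of_lt (show 1 < n by omega)] using congrArg Fin.val h

theorem fin_add_one_ne_self (hn : 2 ≤ n) (k : Fin n) : k + 1 ≠ k :=
  add_ne_left.2 (fin_one_ne_zero hn)

theorem fin_sub_one_ne_self (hn : 2 ≤ n) (k : Fin n) : k - 1 ≠ k := by
  rw [sub_eq_add_neg]
  exact add_ne_left.2 (neg_ne_zero.2 (fin_one_ne_zero hn))

open Fin.CommRing in
theorem fin_sub_one_ne_add_one (hn : 3 ≤ n) (k : Fin n) : k - 1 ≠ k + 1 := fun h => by
  simpa [Nat.mod_eq_of_lt (show 2 < n by omega)] using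
    congrArg Fin.val (show (2 : Fin n) = 0 by linear_combination -h)

/-- `j ∈ cycleFlips n v` iff `v = {j - 1}ᶜ` or `v = {j - 1, j}ᶜ`: the edges `{k}ᶜ — {k, k + 1}ᶜ`,
indices mod `n`, whose reversal closes the directed cycle `{k}ᶜ → {k, k + 1}ᶜ → {k + 1}ᶜ`. -/
def cycleFlips (n : ℕ) [NeZero n] (v : Finset (Fin n)) : Finset (Fin n) :=
  {j | j - 1 ∉ v ∧ vᶜ ⊆ {j - 1, j}}

theorem mem_cycleFlips {v : Finset (Fin n)} {j : Fin n} :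
    j ∈ cycleFlips n v ↔ j - 1 ∉ v ∧ vᶜ ⊆ {j - 1, j} := by
  simp [cycleFlips]

theorem isEdgeMatching_cycleFlips (hn : 3 ≤ n) : IsEdgeMatching (cycleFlips n) where
  mem_symmDiff_singleton v j hj := by
    rw [mem_cycleFlips] at hj ⊢
    refine ⟨by simp [mem_symmDiff, hj.1, fin_sub_one_ne_self (by omega) j], fun x hx => ?_⟩
    by_cases hxj : x = j
    · simp [hxj]
    · exact hj.2 (by simp_all)
  card_le_one v := by
    refine card_le_one.2 fun j hj i hi => ?_
    rw [mem_cycleFlips] at hj hi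
    by_contra hij
    have hj_pred : j - 1 = i := by
      rcases mem_insert.1 (hi.2 (mem_compl.2 hj.1)) with h | h
      · exact absurd (sub_left_inj.1 h) hij
      · exact mem_singleton.1 h
    have hi_pred : i - 1 = j := by
      rcases mem_insert.1 (hj.2 (mem_compl.2 hi.1)) with h | h
      · exact absurd (sub_left_inj.1 h).symm hij
      · exact mem_singleton.1 h
    exact fin_sub_one_ne_add_one hn (j - 1) (by rw [sub_add_cancel, hj_pred, hi_pred])

theorem step_compl_singleton (hn : 2 ≤ n) (k : Fin n) :
    Step (uniformFlip (cycleFlips n)) {k}ᶜ {k, k + 1}ᶜ := by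
  have hne := fin_add_one_ne_self hn k
  have hflip : k + 1 ∈ cycleFlips n {k}ᶜ := mem_cycleFlips.2 ⟨by simp, by simp⟩
  refine ⟨k + 1, by simp [uniformFlip, mem_symmDiff, hflip, hne], ?_⟩
  ext x
  by_cases hx : x = k + 1 <;> simp_all [mem_symmDiff]

theorem step_compl_pair (hn : 3 ≤ n) (k : Fin n) :
    Step (uniformFlip (cycleFlips n)) {k, k + 1}ᶜ {k + 1}ᶜ := by
  have hne := fin_add_one_ne_self (by omega) k
  have hflip : k ∉ cycleFlips n {k, k + 1}ᶜ := by
    simp [mem_cycleFlips, fin_sub_one_ne_self (n := n) (by omega), fin_sub_one_ne_add_one hn]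
  refine ⟨k, by
    rw [uniformFlip, mem_symmDiff, compl_compl]
    exact .inl ⟨mem_insert_self _ _, hflip⟩, ?_⟩
  ext x
  by_cases hx : x = k <;> simp_all [mem_symmDiff]

open Fin.CommRing in
theorem reach_compl_singleton (hn : 3 ≤ n) (k j : Fin n) :
    Reach (uniformFlip (cycleFlips n)) {k}ᶜ {j}ᶜ := by
  have hiter : ∀ m : ℕ, Reach (uniformFlip (cycleFlips n)) {k}ᶜ {k + m}ᶜ := by
    intro m
    induction m with
    | zero => rw [Nat.cast_zero, add_zero]; exact .refl
    | succ m ih =>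
      rw [Nat.cast_succ, ← add_assoc]
      exact ih.tail (step_compl_singleton (by omega) _) |>.tail (step_compl_pair hn _)
  simpa using hiter (j - k).val

theorem mem_uniformFlip_compl_singleton (hn : 2 ≤ n) (k : Fin n) :
    k ∈ uniformFlip (cycleFlips n) {k}ᶜ := by
  have hflip : k ∉ cycleFlips n {k}ᶜ := by simp [mem_cycleFlips, fin_sub_one_ne_self hn]
  simp [uniformFlip, mem_symmDiff, hflip]

theorem uniformFlip_cycleFlips_univ : uniformFlip (cycleFlips n) univ = ∅ := by
  simp [uniformFlip, cycleFlips]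

theorem reachmap_uniformFlip_cycleFlips (hn : 3 ≤ n) {v : Finset (Fin n)} (hv : v ≠ univ) :
    reachmap (uniformFlip (cycleFlips n)) v = Set.univ := by
  obtain ⟨k, hk⟩ := (isEdgeMatching_cycleFlips hn).exists_reach_compl_singleton hv
  exact Set.eq_univ_of_forall fun j =>
    ⟨{j}ᶜ, hk.trans (reach_compl_singleton hn k j), mem_uniformFlip_compl_singleton (by omega) j⟩

end Cycle

end USO

open USO in
/-- for every n (≥ 3, as cyclic USOs require at least 3 dimensions)
there is a cyclic USO in which every non-sink vertex has full reachmap [n];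
in particular it is not i-nice for any i < n. -/
theorem exists_cyclic_uso_not_nice (n : ℕ) (hn : 3 ≤ n) :
    ∃ s : Finset (Fin n) → Finset (Fin n),
      IsUSO s ∧ ¬ IsAcyclic s ∧
      (∀ v, s v ≠ ∅ → reachmap s v = Set.univ) ∧
      ∀ i, i < n → ¬ IsNice i s := by
  have : NeZero n := ⟨by omega⟩
  have hD := isEdgeMatching_cycleFlips hn
  have hfull := @reachmap_uniformFlip_cycleFlips n _ hn
  refine ⟨uniformFlip (cycleFlips n), hD.isUSO, fun hacyclic => ?_,
    fun v hv => hfull fun h => hv (h ▸ uniformFlip_cycleFlips_univ), fun i hi hnice => ?_⟩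
  · have := hacyclic _ _ (reach_compl_singleton hn 0 1) (reach_compl_singleton hn 1 0)
    exact fin_one_ne_zero (n := n) (by omega) (singleton_inj.1 (compl_inj_iff.1 this)).symm
  · have hempty : (∅ : Finset (Fin n)) ≠ univ := univ_nonempty.ne_empty.symm
    obtain ⟨j, -, hj⟩ := hD.exists_mem_uniformFlip_notMem (v := ∅)
      (by rw [compl_empty, card_univ, Fintype.card_fin]; omega)
    obtain ⟨u, ⟨k, hk, hpath⟩, hsub⟩ := hnice ∅ (ne_empty_of_mem hj)
    have hu : u ≠ univ := by
      rintro rfl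
      have := card_le_add_of_stepN hpath
      rw [card_univ, Fintype.card_fin, card_empty] at this
      omega
    rw [hfull hu, hfull hempty] at hsub
    exact hsub.ne rfl
end

section
/- In a completely unimodal numbering φ of the n-cube (n ≥ 2) coming from an acyclic USO, the vertices numbered 1 and 2 (i.e., the second- and third-lowest vertices w^1 and w^2) are each the sink of some facet; moreover w^1 is adjacent to the global sink w^0 with its edge directed toward w^0, and w^2 has exactly one outgoing edge, directed to w^0 or w^1. -/
open Finset

/-- in the completely unimodal numbering of an acyclic USO (n ≥ 2),
the vertices numbered 1 and 2 are facet sinks; w¹ has its edge directed to the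
global sink w⁰, and w² has exactly one outgoing edge, directed to w⁰ or w¹. -/
theorem cun_low_vertices {n : ℕ} (hn : 2 ≤ n)
    (s : Finset (Fin n) → Finset (Fin n)) (hs : IsUSO s)
    (φ : Finset (Fin n) ≃ Fin (2 ^ n))
    (hφ : ∀ v j, j ∈ s v → ((φ (symmDiff v {j})) : ℕ) < ((φ v) : ℕ))
    (w0 w1 w2 : Finset (Fin n))
    (hw0 : ((φ w0) : ℕ) = 0) (hw1 : ((φ w1) : ℕ) = 1) (hw2 : ((φ w2) : ℕ) = 2) :
    (∃ j, j ∈ s w1 ∧ w0 = symmDiff w1 {j}) ∧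
    (∃ j, s w2 = {j} ∧ (symmDiff w2 {j} = w0 ∨ symmDiff w2 {j} = w1)) ∧
    (∃ j, s w1 ⊆ {j}) ∧ (∃ j, s w2 ⊆ {j}) := by

  have hsw0 : s w0 = ∅ := by
    rw [← Finset.not_nonempty_iff_eq_empty]
    rintro ⟨j, hj⟩
    have := hφ w0 j hj
    omega
  have huniq : ∀ v, s v = ∅ → v = w0 := by
    intro v hv
    obtain ⟨u, _, hun⟩ := hs Finset.univ ∅
    have h1 := hun v ⟨Finset.subset_univ _, by rw [Finset.inter_comm, Finset.univ_inter, hv]⟩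
    have h2 := hun w0 ⟨Finset.subset_univ _, by rw [Finset.inter_comm, Finset.univ_inter, hsw0]⟩
    rw [h1, h2]
  have hval : ∀ v u : Finset (Fin n), ((φ v) : ℕ) = ((φ u) : ℕ) → v = u := by
    intro v u h
    exact φ.injective (Fin.ext h)
  have h10 : w1 ≠ w0 := fun h => by rw [h] at hw1; omega
  have h20 : w2 ≠ w0 := fun h => by rw [h] at hw2; omega
  obtain ⟨j1, hj1⟩ : (s w1).Nonempty :=
    Finset.nonempty_iff_ne_empty.mpr (fun h => h10 (huniq w1 h))
  have hn1 : ∀ j ∈ s w1, symmDiff w1 {j} = w0 := by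
    intro j hj
    have h := hφ w1 j hj
    rw [hw1] at h
    exact hval _ _ (by omega)
  have hs1 : s w1 ⊆ {j1} := by
    intro j hj
    have := Finset.singleton_injective
      (symmDiff_right_injective w1 ((hn1 j hj).trans (hn1 j1 hj1).symm))
    simp [this]
  obtain ⟨j2, hj2⟩ : (s w2).Nonempty :=
    Finset.nonempty_iff_ne_empty.mpr (fun h => h20 (huniq w2 h))
  have hn2 : ∀ j ∈ s w2, symmDiff w2 {j} = w0 ∨ symmDiff w2 {j} = w1 := by
    intro j hj
    have h := hφ w2 j hj
    rw [hw2] at h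
    have h' : ((φ (symmDiff w2 {j})) : ℕ) = 0 ∨ ((φ (symmDiff w2 {j})) : ℕ) = 1 := by omega
    rcases h' with h' | h'
    · exact Or.inl (hval _ _ (by omega))
    · exact Or.inr (hval _ _ (by omega))
  have hmix : ∀ a b : Fin n, symmDiff w2 {a} = w0 → symmDiff w2 {b} = w1 → False := by
    intro a b ha hb
    have hw0eq : symmDiff w2 {a} = symmDiff w2 (symmDiff {b} {j1}) := by
      rw [← symmDiff_assoc, hb, hn1 j1 hj1, ha]
    have hcancel := symmDiff_right_injective w2 hw0eq
    by_cases hbj : b = j1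
    · rw [hbj, symmDiff_self] at hcancel
      exact Finset.singleton_ne_empty a hcancel
    · have hb' : b ∈ symmDiff ({b} : Finset (Fin n)) {j1} := by
        simp [Finset.mem_symmDiff, hbj]
      have hj' : j1 ∈ symmDiff ({b} : Finset (Fin n)) {j1} := by
        simp [Finset.mem_symmDiff, Ne.symm hbj]
      rw [← hcancel] at hb' hj'
      simp only [Finset.mem_singleton] at hb' hj'
      exact hbj (hb'.trans hj'.symm)
  have hs2eq : s w2 = {j2} := by
    apply Finset.eq_singleton_iff_unique_mem.mpr
    refine ⟨hj2, fun j hj => ?_⟩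
    rcases hn2 j hj with h | h <;> rcases hn2 j2 hj2 with h2 | h2
    · exact Finset.singleton_injective (symmDiff_right_injective w2 (h.trans h2.symm))
    · exact (hmix j j2 h h2).elim
    · exact (hmix j2 j h2 h).elim
    · exact Finset.singleton_injective (symmDiff_right_injective w2 (h.trans h2.symm))
  exact ⟨⟨j1, hj1, (hn1 j1 hj1).symm⟩, ⟨j2, hs2eq, hn2 j2 hj2⟩, ⟨j1, hs1⟩,
    ⟨j2, by rw [hs2eq]⟩⟩
end
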